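/- arXiv:2308.01101 — 13 statements merged into one kernel-verified Lean document; each statement's English description precedes it below -/
import Mathlib

section
/- Let α, β, z, w, u, v ∈ ℂ with α·β ≠ 1 and z·w ≠ 1, and assume all denominators below are nonzero, namely: 1 + w·α ≠ 0, 1 + z·β ≠ 0, 1 + α·w ≠ 0, 1 + w·u ≠ 0, 1 + z·v ≠ 0, 1 + β·(z+u)/(1+w·u) ≠ 0, 1 + α·(w+v)/(1+z·v) ≠ 0, 1 + W·u ≠ 0 and 1 + Z·v ≠ 0, where Z := (z+α)/(1+w·α), W := (w+β)/(1+z·β) and γ := (1+α·w)/(1+β·z). Then Φ_{α,β}(Φ_{z,w}(u,v)) = ρ_γ(Φ_{Z,W}(u,v)); explicitly, (α + (z+u)/(1+w·u))/(1 + β·(z+u)/(1+w·u)) = γ·(Z+u)/(1+W·u) and (β + (w+v)/(1+z·v))/(1 + α·(w+v)/(1+z·v)) = ((W+v)/(1+Z·v))/γ. -/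
/-- composition law `Φ_{α,β} ∘ Φ_{z,w} = ρ_γ ∘ Φ_{Z,W}` for the Möbius-type
maps `Φ_{z,w}(u,v) = ((z+u)/(1+w·u), (w+v)/(1+z·v))` and dilations `ρ_γ(u,v) = (γu, v/γ)`. -/
theorem stmt0 (α β z w u v Z W γ : ℂ)
    (hZ : Z = (z + α) / (1 + w * α))
    (hW : W = (w + β) / (1 + z * β))
    (hγ : γ = (1 + α * w) / (1 + β * z))
    (hαβ : α * β ≠ 1) (hzw : z * w ≠ 1)
    (d1 : 1 + w * α ≠ 0) (d2 : 1 + z * β ≠ 0) (d3 : 1 + α * w ≠ 0)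
    (d4 : 1 + w * u ≠ 0) (d5 : 1 + z * v ≠ 0)
    (d6 : 1 + β * ((z + u) / (1 + w * u)) ≠ 0)
    (d7 : 1 + α * ((w + v) / (1 + z * v)) ≠ 0)
    (d8 : 1 + W * u ≠ 0) (d9 : 1 + Z * v ≠ 0) :
    (α + (z + u) / (1 + w * u)) / (1 + β * ((z + u) / (1 + w * u)))
        = γ * ((Z + u) / (1 + W * u)) ∧
    (β + (w + v) / (1 + z * v)) / (1 + α * ((w + v) / (1 + z * v)))
        = ((W + v) / (1 + Z * v)) / γ := by
  have d2' : 1 + β * z ≠ 0 := by rwa [mul_comm]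
  have hγ0 : γ ≠ 0 := by rw [hγ]; exact div_ne_zero d3 d2'
  have d6' : 1 + w * u + β * (z + u) ≠ 0 := by
    intro h; apply d6; rw [mul_comm w u] at d4 h ⊢; field_simp; linear_combination h
  have d7' : 1 + z * v + α * (w + v) ≠ 0 := by
    intro h; apply d7; rw [mul_comm z v] at d5 h ⊢; field_simp; linear_combination h
  have d8' : 1 + z * β + (w + β) * u ≠ 0 := by
    intro h; apply d8; rw [hW]; field_simp; linear_combination h
  have d9' : 1 + w * α + (z + α) * v ≠ 0 := by
    intro h; apply d9; rw [hZ]; field_simp; linear_combination h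
  subst hZ hW
  constructor
  · have key1 : (α + (z + u) / (1 + w * u)) / (1 + β * ((z + u) / (1 + w * u)))
        = (α * (1 + w * u) + (z + u)) / (1 + w * u + β * (z + u)) := by
      rw [div_eq_div_iff d6 d6']; rw [mul_comm w u] at d4 ⊢; field_simp
    have key2 : ((z + α) / (1 + w * α) + u) / (1 + (w + β) / (1 + z * β) * u)
        = ((z + α) * (1 + z * β) + u * (1 + w * α) * (1 + z * β))
            / ((1 + w * α) * (1 + z * β + (w + β) * u)) := by
      rw [div_eq_div_iff d8 (mul_ne_zero d1 d8')]; field_simp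
    rw [key1, key2, hγ, div_mul_div_comm,
      div_eq_div_iff d6' (mul_ne_zero d2' (mul_ne_zero d1 d8'))]
    ring
  · have key1 : (β + (w + v) / (1 + z * v)) / (1 + α * ((w + v) / (1 + z * v)))
        = (β * (1 + z * v) + (w + v)) / (1 + z * v + α * (w + v)) := by
      rw [div_eq_div_iff d7 d7']; rw [mul_comm z v] at d5 ⊢; field_simp
    have key2 : ((w + β) / (1 + z * β) + v) / (1 + (z + α) / (1 + w * α) * v)
        = ((w + β) * (1 + w * α) + v * (1 + z * β) * (1 + w * α))
            / ((1 + z * β) * (1 + w * α + (z + α) * v)) := by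
      rw [div_eq_div_iff d9 (mul_ne_zero d2 d9')]; field_simp
    rw [key1, key2, hγ, div_div_div_comm,
      div_eq_div_iff d7' (div_ne_zero (mul_ne_zero d2 d9') d2')]
    field_simp
    ring
end

section
/- Let U ⊆ O be open, let f : ℂ × ℂ → ℂ be holomorphic on U, and let (z,w) ∈ U. Then there exists r > 0 such that for all u, v ∈ ℂ with |u| < r and |v| < r one has 1 + w·u ≠ 0, 1 + z·v ≠ 0, the point ((z+u)/(1+w·u), (w+v)/(1+z·v)) lies in U, and the double series indexed by (m,n) ∈ ℕ × ℕ with general term (D^{m,n} f(z,w)/(m!·n!))·u^m·v^n has sum f((z+u)/(1+w·u), (w+v)/(1+z·v)) (HasSum over ℕ × ℕ). -/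
/-- The domain `O = {(z,w) ∈ ℂ² : z·w ≠ 1}`. -/
def Oset : Set (ℂ × ℂ) := {p | p.1 * p.2 ≠ 1}

/-- The Peschl–Minda derivative of order `(m,n)` of `f` at `(z,w)`. -/
noncomputable def PM (m n : ℕ) (f : ℂ × ℂ → ℂ) (z w : ℂ) : ℂ :=
  iteratedDeriv n (fun v => iteratedDeriv m
    (fun u => f ((z + u) / (1 + w * u), (w + v) / (1 + z * v))) 0) 0

open Complex Metric Set MeasureTheory Filter
open scoped Real Topology NNReal Interval

namespace PMaux

/-- One-variable Taylor expansion in `mul` form. -/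
lemma taylor_hasSum {h : ℂ → ℂ} {R : ℝ} (hd : DifferentiableOn ℂ h (ball (0:ℂ) R))
    {t : ℂ} (ht : ‖t‖ < R) :
    HasSum (fun m : ℕ => iteratedDeriv m h 0 / (m.factorial : ℂ) * t ^ m) (h t) := by
  have H := Complex.hasSum_taylorSeries_on_ball hd
      (by simpa [mem_ball_zero_iff] using ht)
  convert H using 2 with m
  · rfl
  simp [smul_eq_mul]
  ring

lemma iteratedDeriv_div_factorial_eq {h : ℂ → ℂ} {R : ℝ≥0} (hR : 0 < R)
    (hd : DifferentiableOn ℂ h (closedBall (0:ℂ) R)) (m : ℕ) :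
    iteratedDeriv m h 0 / (m.factorial : ℂ)
      = cauchyPowerSeries h 0 R m (fun _ => 1) := by
  have H := (hd.hasFPowerSeriesOnBall hR).factorial_smul (1:ℂ) m
  rw [iteratedDeriv_eq_iteratedFDeriv, ← H, nsmul_eq_mul]
  have hm : ((m.factorial : ℂ)) ≠ 0 := Nat.cast_ne_zero.mpr m.factorial_ne_zero
  field_simp

lemma norm_iteratedDeriv_div_factorial_le {h : ℂ → ℂ} {R C : ℝ} (hR : 0 < R)
    (hd : DifferentiableOn ℂ h (closedBall (0:ℂ) R))
    (hC : ∀ x ∈ closedBall (0:ℂ) R, ‖h x‖ ≤ C) (m : ℕ) :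
    ‖iteratedDeriv m h 0 / (m.factorial : ℂ)‖ ≤ C / R ^ m := by
  lift R to ℝ≥0 using hR.le
  have hR' : (0:ℝ≥0) < R := by exact_mod_cast hR
  rw [iteratedDeriv_div_factorial_eq hR' hd m]
  have h1 : ‖cauchyPowerSeries h 0 R m (fun _ => (1:ℂ))‖ ≤ ‖cauchyPowerSeries h 0 R m‖ := by
    simpa using (cauchyPowerSeries h 0 R m).le_opNorm (fun _ => (1:ℂ))
  have hcont : Continuous fun θ : ℝ => ‖h (circleMap 0 R θ)‖ :=
    (hd.continuousOn.comp_continuous (continuous_circleMap 0 R)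
      (fun θ => circleMap_mem_closedBall 0 R.coe_nonneg θ)).norm
  have hint : ∫ θ in (0:ℝ)..2 * π, ‖h (circleMap 0 R θ)‖ ≤ C * (2 * π) := by
    calc ∫ θ in (0:ℝ)..2 * π, ‖h (circleMap 0 R θ)‖
        ≤ ∫ _ in (0:ℝ)..2 * π, C := by
          apply intervalIntegral.integral_mono_on Real.two_pi_pos.le
            (hcont.intervalIntegrable _ _) intervalIntegrable_const
          intro θ _
          exact hC _ (circleMap_mem_closedBall 0 R.coe_nonneg θ)
      _ = C * (2 * π) := by simp [mul_comm]
  refine h1.trans ((norm_cauchyPowerSeries_le h 0 R m).trans ?_)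
  have habs : |(R:ℝ)| = (R:ℝ) := abs_of_nonneg R.coe_nonneg
  have hC0 : 0 ≤ C := le_trans (norm_nonneg _) (hC 0 (mem_closedBall_self R.coe_nonneg))
  calc (2 * π)⁻¹ * (∫ θ in (0:ℝ)..2 * π, ‖h (circleMap 0 R θ)‖) * |(R:ℝ)|⁻¹ ^ m
      ≤ (2 * π)⁻¹ * (C * (2 * π)) * |(R:ℝ)|⁻¹ ^ m := by
        exact mul_le_mul_of_nonneg_right
          (mul_le_mul_of_nonneg_left hint (by positivity)) (by positivity)
    _ = C / (R:ℝ) ^ m := by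
        rw [habs, inv_pow]
        have : (2 * π)⁻¹ * (C * (2 * π)) = C := by
          field_simp
        rw [this, div_eq_mul_inv]


lemma diff_param {R C : ℝ} (hR : 0 < R) {G : ℂ → ℂ → ℂ}
    (hGv : ∀ u ∈ sphere (0:ℂ) R, DifferentiableOn ℂ (fun v => G u v) (ball (0:ℂ) R))
    (hC : ∀ u ∈ sphere (0:ℂ) R, ∀ v ∈ ball (0:ℂ) R, ‖G u v‖ ≤ C)
    (hcont : ContinuousOn (fun p : ℂ × ℂ => G p.1 p.2) (sphere (0:ℂ) R ×ˢ ball (0:ℂ) R))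
    (m : ℕ) {v₀ : ℂ} (hv₀ : v₀ ∈ ball (0:ℂ) R) :
    DifferentiableAt ℂ (fun v => ∮ u in C(0, R), u⁻¹ ^ m • u⁻¹ • G u v) v₀ := by
  have hsph : ∀ θ : ℝ, circleMap 0 R θ ∈ sphere (0:ℂ) R := circleMap_mem_sphere 0 hR.le
  have hne : ∀ θ : ℝ, circleMap 0 R θ ≠ 0 := fun θ => circleMap_ne_center hR.ne'
  set c : ℝ → ℂ := fun θ =>
    deriv (circleMap 0 R) θ * ((circleMap 0 R θ)⁻¹ ^ m * (circleMap 0 R θ)⁻¹) with hcdef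
  have hccont : Continuous c := by
    have h1 : Continuous fun θ => deriv (circleMap 0 R) θ := by
      have h2 : (fun θ => deriv (circleMap 0 R) θ) = fun θ => circleMap 0 R θ * I := by
        funext θ; exact deriv_circleMap 0 R θ
      rw [h2]; exact (continuous_circleMap 0 R).mul continuous_const
    exact h1.mul ((((continuous_circleMap 0 R).inv₀ hne).pow m).mul
      ((continuous_circleMap 0 R).inv₀ hne))
  set F : ℂ → ℝ → ℂ := fun v θ => c θ * G (circleMap 0 R θ) v with hFdef
  set F' : ℂ → ℝ → ℂ := fun v θ => c θ * deriv (fun y => G (circleMap 0 R θ) y) v with hF'def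
  have hv₀R : ‖v₀‖ < R := by simpa [mem_ball_zero_iff] using hv₀
  set ε : ℝ := (R - ‖v₀‖) / 2 with hεdef
  have hε0 : 0 < ε := div_pos (sub_pos.mpr hv₀R) two_pos
  -- membership facts
  have hvlt : ∀ v ∈ ball v₀ ε, ‖v‖ < R - ε := by
    intro v hv
    have h1 : ‖v - v₀‖ < ε := by
      simpa [mem_ball, Complex.dist_eq] using hv
    have h2 : ‖v‖ ≤ ‖v - v₀‖ + ‖v₀‖ := by
      calc ‖v‖ = ‖(v - v₀) + v₀‖ := by ring_nf
        _ ≤ ‖v - v₀‖ + ‖v₀‖ := norm_add_le _ _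
    have : ε + ‖v₀‖ = R - ε := by rw [hεdef]; ring
    linarith
  have hmemball : ∀ v ∈ ball v₀ ε, v ∈ ball (0:ℂ) R := by
    intro v hv
    have := hvlt v hv
    simp only [mem_ball_zero_iff]
    linarith
  have hclosed : ∀ v ∈ ball v₀ ε, closedBall v ε ⊆ ball (0:ℂ) R := by
    intro v hv y hy
    have h1 : ‖y - v‖ ≤ ε := by
      simpa [mem_closedBall, Complex.dist_eq] using hy
    have h2 : ‖y‖ ≤ ‖y - v‖ + ‖v‖ := by
      calc ‖y‖ = ‖(y - v) + v‖ := by ring_nf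
        _ ≤ ‖y - v‖ + ‖v‖ := norm_add_le _ _
    have h3 := hvlt v hv
    simp only [mem_ball_zero_iff]
    linarith
  -- continuity in θ
  have hGcontθ : ∀ v ∈ ball (0:ℂ) R, Continuous fun θ => G (circleMap 0 R θ) v := by
    intro v hv
    exact hcont.comp_continuous ((continuous_circleMap 0 R).prodMk continuous_const)
      (fun θ => ⟨hsph θ, hv⟩)
  have hFcont : ∀ v ∈ ball (0:ℂ) R, Continuous (F v) := fun v hv =>
    hccont.mul (hGcontθ v hv)
  -- measurability hypotheses
  have hF_meas : ∀ᶠ v in 𝓝 v₀, AEStronglyMeasurable (F v)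
      (MeasureTheory.volume.restrict (Ι (0:ℝ) (2 * π))) := by
    filter_upwards [isOpen_ball.mem_nhds hv₀] with v hv
    exact (hFcont v hv).aestronglyMeasurable
  have hF_int : IntervalIntegrable (F v₀) MeasureTheory.volume 0 (2 * π) :=
    (hFcont v₀ hv₀).intervalIntegrable _ _
  -- derivative facts
  have hder : ∀ (θ : ℝ), ∀ v ∈ ball (0:ℂ) R,
      HasDerivAt (fun y => G (circleMap 0 R θ) y)
        (deriv (fun y => G (circleMap 0 R θ) y) v) v := fun θ v hv =>
    ((hGv _ (hsph θ)).differentiableAt (isOpen_ball.mem_nhds hv)).hasDerivAt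
  -- measurability of F' v₀
  have hF'_meas : AEStronglyMeasurable (F' v₀)
      (MeasureTheory.volume.restrict (Ι (0:ℝ) (2 * π))) := by
    set seq : ℕ → ℝ → ℂ := fun n θ =>
      c θ * slope (fun y => G (circleMap 0 R θ) y) v₀ (v₀ + ((ε / (n + 1) : ℝ) : ℂ)) with hseq
    have hδpos : ∀ n : ℕ, 0 < ε / ((n:ℝ) + 1) := fun n => by positivity
    have hδle : ∀ n : ℕ, ε / ((n:ℝ) + 1) ≤ ε := fun n => by
      rw [div_le_iff₀ (by positivity)]
      nlinarith [hε0]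
    have hmem : ∀ n : ℕ, v₀ + ((ε / (n + 1) : ℝ) : ℂ) ∈ ball (0:ℂ) R := by
      intro n
      have h1 : ‖v₀ + ((ε / (n + 1) : ℝ) : ℂ)‖
          ≤ ‖v₀‖ + ε / ((n:ℝ) + 1) := by
        refine (norm_add_le _ _).trans ?_
        rw [Complex.norm_real, Real.norm_eq_abs, abs_of_pos (hδpos n)]
      have h2 : ‖v₀‖ + ε < R := by rw [hεdef]; linarith
      have := hδle n
      simp only [mem_ball_zero_iff]
      linarith
    have hseqcont : ∀ n : ℕ, Continuous (seq n) := by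
      intro n
      apply hccont.mul
      have : (fun θ => slope (fun y => G (circleMap 0 R θ) y) v₀
          (v₀ + ((ε / (n + 1) : ℝ) : ℂ)))
          = fun θ => ((v₀ + ((ε / (n + 1) : ℝ) : ℂ)) - v₀)⁻¹
            • (G (circleMap 0 R θ) (v₀ + ((ε / (n + 1) : ℝ) : ℂ)) - G (circleMap 0 R θ) v₀) := by
        funext θ; rfl
      rw [this]
      exact ((hGcontθ _ (hmem n)).sub (hGcontθ _ hv₀)).const_smul (((v₀ + ((ε / (n + 1) : ℝ) : ℂ)) - v₀)⁻¹)
    have htend : ∀ θ : ℝ, Filter.Tendsto (fun n => seq n θ) atTop (𝓝 (F' v₀ θ)) := by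
      intro θ
      have hslope := hasDerivAt_iff_tendsto_slope.mp (hder θ v₀ hv₀)
      have hδtend : Filter.Tendsto (fun n : ℕ => (ε / ((n:ℝ) + 1))) atTop (𝓝 0) := by
        have : Filter.Tendsto (fun n : ℕ => 1 / ((n:ℝ) + 1)) atTop (𝓝 0) :=
          tendsto_one_div_add_atTop_nhds_zero_nat
        have h2 : Filter.Tendsto (fun n : ℕ => ε * (1 / ((n:ℝ) + 1))) atTop (𝓝 (ε * 0)) :=
          Filter.Tendsto.const_mul ε this
        simpa [mul_one_div, div_eq_mul_inv] using h2
      have hwtend : Filter.Tendsto (fun n : ℕ => v₀ + ((ε / (n + 1) : ℝ) : ℂ)) atTop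
          (𝓝[≠] v₀) := by
        apply tendsto_nhdsWithin_of_tendsto_nhds_of_eventually_within
        · have h := (Complex.continuous_ofReal.tendsto 0).comp hδtend
          simp only [Function.comp_def] at h
          push_cast at h
          have h3 := Filter.Tendsto.const_add v₀ h
          simpa using h3
        · apply Filter.Eventually.of_forall
          intro n
          simp only [mem_compl_iff, mem_singleton_iff]
          intro h
          have : ((ε / (n + 1) : ℝ) : ℂ) = 0 := by
            have := congrArg (fun x => x - v₀) h
            simpa using this
          rw [Complex.ofReal_eq_zero] at this
          exact (hδpos n).ne' this
      exact Filter.Tendsto.const_mul (c θ) (hslope.comp hwtend)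
    exact aestronglyMeasurable_of_tendsto_ae atTop
      (fun n => (hseqcont n).aestronglyMeasurable)
      (Filter.Eventually.of_forall htend)
  -- bound on the derivative
  have hC0 : 0 ≤ C := le_trans (norm_nonneg _) (hC _ (hsph 0) v₀ hv₀)
  have hderiv_bound : ∀ (θ : ℝ), ∀ v ∈ ball v₀ ε,
      ‖deriv (fun y => G (circleMap 0 R θ) y) v‖ ≤ C / ε := by
    intro θ v hv
    apply Complex.norm_deriv_le_of_forall_mem_sphere_norm_le hε0
    · constructor
      · exact (hGv _ (hsph θ)).mono ((ball_subset_closedBall).trans (hclosed v hv))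
      · exact ((hGv _ (hsph θ)).continuousOn).mono
          ((closure_ball_subset_closedBall).trans (hclosed v hv))
    · intro y hy
      exact hC _ (hsph θ) y (hclosed v hv (sphere_subset_closedBall hy))
  have h_bound : ∀ᵐ θ ∂(MeasureTheory.volume), θ ∈ Ι (0:ℝ) (2 * π) →
      ∀ v ∈ ball v₀ ε, ‖F' v θ‖ ≤ ‖c θ‖ * (C / ε) := by
    apply Filter.Eventually.of_forall
    intro θ _ v hv
    rw [hF'def]
    simp only [norm_mul]
    exact mul_le_mul_of_nonneg_left (hderiv_bound θ v hv) (norm_nonneg _)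
  have bound_int : IntervalIntegrable (fun θ => ‖c θ‖ * (C / ε))
      MeasureTheory.volume 0 (2 * π) :=
    (hccont.norm.mul continuous_const).intervalIntegrable _ _
  have h_diff : ∀ᵐ θ ∂(MeasureTheory.volume), θ ∈ Ι (0:ℝ) (2 * π) →
      ∀ v ∈ ball v₀ ε, HasDerivAt (fun y => F y θ) (F' v θ) v := by
    apply Filter.Eventually.of_forall
    intro θ _ v hv
    exact (hder θ v (hmemball v hv)).const_mul (c θ)
  have key := (intervalIntegral.hasDerivAt_integral_of_dominated_loc_of_deriv_le (ball_mem_nhds v₀ hε0)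
    hF_meas hF_int hF'_meas h_bound bound_int h_diff).2
  have heq : (fun v => ∮ u in C(0, R), u⁻¹ ^ m • u⁻¹ • G u v)
      = fun v => ∫ θ in (0:ℝ)..2 * π, F v θ := by
    funext v
    simp only [circleIntegral, hFdef, hcdef, smul_eq_mul]
    congr 1
    funext θ
    ring
  rw [heq]
  exact key.differentiableAt

lemma iteratedDeriv_eq_circleIntegral {h : ℂ → ℂ} {R : ℝ} (hR : 0 < R)
    (hd : DifferentiableOn ℂ h (closedBall (0:ℂ) R)) (m : ℕ) :
    iteratedDeriv m h 0 = (m.factorial : ℂ) *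
      ((2 * π * Complex.I)⁻¹ • ∮ u in C(0, R), u⁻¹ ^ m • u⁻¹ • h u) := by
  lift R to ℝ≥0 using hR.le
  have hR' : (0:ℝ≥0) < R := by exact_mod_cast hR
  have h1 := iteratedDeriv_div_factorial_eq hR' hd m
  rw [cauchyPowerSeries_apply] at h1
  simp only [sub_zero, one_div] at h1
  have hm : ((m.factorial : ℂ)) ≠ 0 := Nat.cast_ne_zero.mpr m.factorial_ne_zero
  rw [← h1]
  field_simp

end PMaux

open PMaux

/-- Taylor expansion of `f ∘ Φ_{z,w}` in terms of Peschl–Minda derivatives. -/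
theorem stmt1 (U : Set (ℂ × ℂ)) (hU : IsOpen U) (hUO : U ⊆ Oset)
    (f : ℂ × ℂ → ℂ) (hf : DifferentiableOn ℂ f U)
    (z w : ℂ) (hzw : (z, w) ∈ U) :
    ∃ r > 0, ∀ u v : ℂ, ‖u‖ < r → ‖v‖ < r →
      1 + w * u ≠ 0 ∧ 1 + z * v ≠ 0 ∧
      ((z + u) / (1 + w * u), (w + v) / (1 + z * v)) ∈ U ∧
      HasSum
        (fun mn : ℕ × ℕ =>
          (PM mn.1 mn.2 f z w / ((mn.1.factorial : ℂ) * (mn.2.factorial : ℂ)))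
            * u ^ mn.1 * v ^ mn.2)
        (f ((z + u) / (1 + w * u), (w + v) / (1 + z * v))) := by
  classical
  set G : ℂ → ℂ → ℂ := fun u v => f ((z + u) / (1 + w * u), (w + v) / (1 + z * v)) with hGdef
  obtain ⟨R, hR0, hP⟩ : ∃ R > 0, ∀ u v : ℂ, ‖u‖ ≤ R → ‖v‖ ≤ R →
      1 + w * u ≠ 0 ∧ 1 + z * v ≠ 0 ∧
      ((z + u) / (1 + w * u), (w + v) / (1 + z * v)) ∈ U := by
    set V : Set (ℂ × ℂ) := {p | 1 + w * p.1 ≠ 0 ∧ 1 + z * p.2 ≠ 0} with hV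
    have hVopen : IsOpen V := by
      have h1 : IsOpen {p : ℂ × ℂ | 1 + w * p.1 ≠ 0} :=
        isOpen_compl_singleton.preimage
          (continuous_const.add (continuous_const.mul continuous_fst))
      have h2 : IsOpen {p : ℂ × ℂ | 1 + z * p.2 ≠ 0} :=
        isOpen_compl_singleton.preimage
          (continuous_const.add (continuous_const.mul continuous_snd))
      exact h1.inter h2
    have hΦcont : ContinuousOn
        (fun p : ℂ × ℂ => ((z + p.1) / (1 + w * p.1), (w + p.2) / (1 + z * p.2))) V := by
      apply ContinuousOn.prodMk
      · exact ContinuousOn.div (continuous_const.add continuous_fst).continuousOn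
          (continuous_const.add (continuous_const.mul continuous_fst)).continuousOn
          (fun p hp => hp.1)
      · exact ContinuousOn.div (continuous_const.add continuous_snd).continuousOn
          (continuous_const.add (continuous_const.mul continuous_snd)).continuousOn
          (fun p hp => hp.2)
    have hT : IsOpen (V ∩
        (fun p : ℂ × ℂ => ((z + p.1) / (1 + w * p.1), (w + p.2) / (1 + z * p.2))) ⁻¹' U) :=
      hΦcont.isOpen_inter_preimage hVopen hU
    have h00 : ((0:ℂ), (0:ℂ)) ∈ V ∩
        (fun p : ℂ × ℂ => ((z + p.1) / (1 + w * p.1), (w + p.2) / (1 + z * p.2))) ⁻¹' U := by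
      constructor
      · constructor <;> simp
      · simp only [mem_preimage]
        simpa using hzw
    obtain ⟨δ, hδ0, hδ⟩ := Metric.isOpen_iff.mp hT _ h00
    refine ⟨δ / 2, by positivity, ?_⟩
    intro u v hu hv
    have hmem : ((u, v) : ℂ × ℂ) ∈ ball ((0:ℂ), (0:ℂ)) δ := by
      rw [mem_ball, Prod.dist_eq]
      simp only [Complex.dist_eq, sub_zero]
      have : max (‖u‖) (‖v‖) ≤ δ / 2 := max_le hu hv
      have : max (‖u‖) (‖v‖) < δ := by linarith
      exact this
    have hm := hδ hmem
    exact ⟨hm.1.1, hm.1.2, hm.2⟩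
  have hball : ∀ x : ℂ, x ∈ closedBall (0:ℂ) R → ‖x‖ ≤ R := fun x hx => by
    simpa [mem_closedBall_zero_iff] using hx
  -- differentiability in u for fixed v
  have hGdiff_u : ∀ v : ℂ, ‖v‖ ≤ R →
      DifferentiableOn ℂ (fun u => G u v) (closedBall (0:ℂ) R) := by
    intro v hv u hu
    obtain ⟨h1, h2, h3⟩ := hP u v (hball u hu) hv
    apply DifferentiableAt.differentiableWithinAt
    have hfd : DifferentiableAt ℂ f ((z + u) / (1 + w * u), (w + v) / (1 + z * v)) :=
      hf.differentiableAt (hU.mem_nhds h3)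
    have hφ : DifferentiableAt ℂ
        (fun x : ℂ => ((z + x) / (1 + w * x), (w + v) / (1 + z * v))) u := by
      apply DifferentiableAt.prodMk
      · exact (differentiableAt_id.const_add z).div
          ((differentiableAt_id.const_mul w).const_add 1) h1
      · exact differentiableAt_const _
    simp only [hGdef]
    exact hfd.comp u hφ
  -- differentiability in v for fixed u
  have hGdiff_v : ∀ u : ℂ, ‖u‖ ≤ R →
      DifferentiableOn ℂ (fun v => G u v) (closedBall (0:ℂ) R) := by
    intro u hu v hv
    obtain ⟨h1, h2, h3⟩ := hP u v hu (hball v hv)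
    apply DifferentiableAt.differentiableWithinAt
    have hfd : DifferentiableAt ℂ f ((z + u) / (1 + w * u), (w + v) / (1 + z * v)) :=
      hf.differentiableAt (hU.mem_nhds h3)
    have hφ : DifferentiableAt ℂ
        (fun y : ℂ => ((z + u) / (1 + w * u), (w + y) / (1 + z * y))) v := by
      apply DifferentiableAt.prodMk
      · exact differentiableAt_const _
      · exact (differentiableAt_id.const_add w).div
          ((differentiableAt_id.const_mul z).const_add 1) h2
    simp only [hGdef]
    exact hfd.comp v hφ
  -- joint continuity
  have hGcont : ContinuousOn (fun p : ℂ × ℂ => G p.1 p.2)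
      (closedBall (0:ℂ) R ×ˢ closedBall (0:ℂ) R) := by
    simp only [hGdef]
    apply ContinuousOn.comp hf.continuousOn ?_ ?_
    · apply ContinuousOn.prodMk
      · exact ContinuousOn.div
          ((continuous_const.add continuous_fst).continuousOn)
          ((continuous_const.add (continuous_const.mul continuous_fst)).continuousOn)
          (fun p hp => (hP p.1 p.2 (hball _ hp.1) (hball _ hp.2)).1)
      · exact ContinuousOn.div
          ((continuous_const.add continuous_snd).continuousOn)
          ((continuous_const.add (continuous_const.mul continuous_snd)).continuousOn)
          (fun p hp => (hP p.1 p.2 (hball _ hp.1) (hball _ hp.2)).2.1)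
    · intro p hp
      exact (hP p.1 p.2 (hball _ hp.1) (hball _ hp.2)).2.2
  obtain ⟨C, hC⟩ := ((isCompact_closedBall (0:ℂ) R).prod
    (isCompact_closedBall (0:ℂ) R)).exists_bound_of_continuousOn hGcont
  have hCnn : 0 ≤ C := le_trans (norm_nonneg _)
    (hC (0, 0) ⟨mem_closedBall_self hR0.le, mem_closedBall_self hR0.le⟩)
  set Fm : ℕ → ℂ → ℂ := fun m v => iteratedDeriv m (fun u => G u v) 0 with hFm
  have hPM : ∀ m n : ℕ, PM m n f z w = iteratedDeriv n (Fm m) 0 := by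
    intro m n
    simp only [hFm, hGdef, PM]
  -- hypotheses for diff_param
  have hGv' : ∀ u ∈ sphere (0:ℂ) R, DifferentiableOn ℂ (fun v => G u v) (ball (0:ℂ) R) := by
    intro u hu
    have : ‖u‖ ≤ R := le_of_eq (by simpa using hu)
    exact (hGdiff_v u this).mono ball_subset_closedBall
  have hC' : ∀ u ∈ sphere (0:ℂ) R, ∀ v ∈ ball (0:ℂ) R, ‖G u v‖ ≤ C := fun u hu v hv =>
    hC (u, v) ⟨sphere_subset_closedBall hu, ball_subset_closedBall hv⟩
  have hcont' : ContinuousOn (fun p : ℂ × ℂ => G p.1 p.2)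
      (sphere (0:ℂ) R ×ˢ ball (0:ℂ) R) :=
    hGcont.mono (prod_mono sphere_subset_closedBall ball_subset_closedBall)
  -- coefficient functions are differentiable
  have hFmeq : ∀ m : ℕ, ∀ v ∈ closedBall (0:ℂ) R, Fm m v = (m.factorial : ℂ) *
      ((2 * π * Complex.I)⁻¹ • ∮ x in C(0, R), x⁻¹ ^ m • x⁻¹ • G x v) := fun m v hv =>
    iteratedDeriv_eq_circleIntegral hR0 (hGdiff_u v (hball v hv)) m
  have hFmdiff : ∀ m : ℕ, DifferentiableOn ℂ (Fm m) (ball (0:ℂ) R) := by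
    intro m v₀ hv₀
    apply DifferentiableAt.differentiableWithinAt
    have hd : DifferentiableAt ℂ (fun v => (m.factorial : ℂ) *
        ((2 * π * Complex.I)⁻¹ • ∮ x in C(0, R), x⁻¹ ^ m • x⁻¹ • G x v)) v₀ :=
      ((diff_param hR0 hGv' hC' hcont' m hv₀).const_smul ((2 * π * Complex.I)⁻¹ : ℂ)).const_mul (m.factorial : ℂ)
    apply hd.congr_of_eventuallyEq
    filter_upwards [isOpen_ball.mem_nhds hv₀] with v hv
    exact hFmeq m v (ball_subset_closedBall hv)
  -- bounds
  have hFmbound : ∀ m : ℕ, ∀ v ∈ closedBall (0:ℂ) R,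
      ‖Fm m v / (m.factorial : ℂ)‖ ≤ C / R ^ m := by
    intro m v hv
    exact norm_iteratedDeriv_div_factorial_le hR0 (hGdiff_u v (hball v hv))
      (fun x hx => hC (x, v) ⟨hx, hv⟩) m
  set R' : ℝ := 3 * R / 4 with hR'def
  have hR'0 : 0 < R' := by positivity
  have hPMbound : ∀ m n : ℕ, ‖iteratedDeriv n (Fm m) 0 / (n.factorial : ℂ)‖
      ≤ ((m.factorial : ℝ) * (C / R ^ m)) / R' ^ n := by
    intro m n
    apply norm_iteratedDeriv_div_factorial_le hR'0
    · exact (hFmdiff m).mono (closedBall_subset_ball (by rw [hR'def]; linarith))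
    · intro x hx
      have hx' : x ∈ closedBall (0:ℂ) R :=
        (closedBall_subset_closedBall (by rw [hR'def]; linarith)) hx
      have h1 := hFmbound m x hx'
      have h2 : ‖Fm m x‖ = ‖Fm m x / (m.factorial : ℂ)‖ * (m.factorial : ℝ) := by
        rw [norm_div, Complex.norm_natCast]
        field_simp
      rw [h2, mul_comm ((m.factorial : ℝ))]
      exact mul_le_mul_of_nonneg_right h1 (Nat.cast_nonneg _)
  -- the radius
  refine ⟨R / 2, by positivity, ?_⟩
  intro u v hu hv
  obtain ⟨h1, h2, h3⟩ := hP u v (by linarith) (by linarith)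
  refine ⟨h1, h2, h3, ?_⟩
  set T : ℕ × ℕ → ℂ := fun mn =>
    PM mn.1 mn.2 f z w / ((mn.1.factorial : ℂ) * (mn.2.factorial : ℂ))
      * u ^ mn.1 * v ^ mn.2 with hT
  set q1 : ℝ := ‖u‖ / R with hq1def
  set q2 : ℝ := ‖v‖ / R' with hq2def
  have hq1nn : 0 ≤ q1 := by positivity
  have hq1lt : q1 < 1 := by rw [hq1def, div_lt_one hR0]; linarith
  have hq2nn : 0 ≤ q2 := by positivity
  have hq2lt : q2 < 1 := by rw [hq2def, div_lt_one hR'0, hR'def]; linarith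
  have hTbound : ∀ mn : ℕ × ℕ, ‖T mn‖ ≤ (C * q1 ^ mn.1) * q2 ^ mn.2 := by
    intro mn
    obtain ⟨m, n⟩ := mn
    have hb := hPMbound m n
    have hmne : ((m.factorial : ℝ)) ≠ 0 := Nat.cast_ne_zero.mpr m.factorial_ne_zero
    have e1 : ‖T (m, n)‖
        = ‖iteratedDeriv n (Fm m) 0 / (n.factorial : ℂ)‖ / (m.factorial : ℝ)
          * ‖u‖ ^ m * ‖v‖ ^ n := by
      simp only [hT]
      rw [hPM m n]
      rw [norm_mul, norm_mul, norm_pow, norm_pow]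
      congr 2
      rw [show iteratedDeriv n (Fm m) 0 / ((m.factorial : ℂ) * (n.factorial : ℂ))
            = iteratedDeriv n (Fm m) 0 / (n.factorial : ℂ) / (m.factorial : ℂ) by
          rw [div_div]; ring_nf]
      rw [norm_div, Complex.norm_natCast]
    rw [e1]
    have e2 : (C * q1 ^ m) * q2 ^ n
        = ((m.factorial : ℝ) * (C / R ^ m) / R' ^ n) / (m.factorial : ℝ)
          * ‖u‖ ^ m * ‖v‖ ^ n := by
      rw [hq1def, hq2def]
      have hRne : R ≠ 0 := hR0.ne'
      have hR'ne : R' ≠ 0 := hR'0.ne'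
      field_simp
      have ea : R ^ m * R⁻¹ ^ m = 1 := by rw [← mul_pow, mul_inv_cancel₀ hRne, one_pow]
      have eb : R' ^ n * R'⁻¹ ^ n = 1 := by rw [← mul_pow, mul_inv_cancel₀ hR'ne, one_pow]
      linear_combination (C * ‖u‖ ^ m * ‖v‖ ^ n) * (R' ^ n * R'⁻¹ ^ n) * ea + (C * ‖u‖ ^ m * ‖v‖ ^ n) * eb
    rw [e2]
    have hmpos : (0:ℝ) < (m.factorial : ℝ) := by positivity
    have h4 : ‖iteratedDeriv n (Fm m) 0 / (n.factorial : ℂ)‖ / (m.factorial : ℝ)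
        ≤ ((m.factorial : ℝ) * (C / R ^ m) / R' ^ n) / (m.factorial : ℝ) := by
      gcongr
    exact mul_le_mul_of_nonneg_right
      (mul_le_mul_of_nonneg_right h4 (by positivity)) (by positivity)
  have hgeo : Summable (fun mn : ℕ × ℕ => (C * q1 ^ mn.1) * q2 ^ mn.2) := by
    have hs1 : Summable (fun m : ℕ => C * q1 ^ m) :=
      (summable_geometric_of_lt_one hq1nn hq1lt).mul_left C
    have hs2 : Summable (fun n : ℕ => q2 ^ n) := summable_geometric_of_lt_one hq2nn hq2lt
    exact hs1.mul_of_nonneg hs2 (fun m => mul_nonneg hCnn (pow_nonneg hq1nn m))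
      (fun n => pow_nonneg hq2nn n)
  have hsum : Summable T := Summable.of_norm_bounded hgeo hTbound
  have hfiber : ∀ m : ℕ, HasSum (fun n => T (m, n))
      ((u ^ m * ((m.factorial : ℂ))⁻¹) * Fm m v) := by
    intro m
    have ht := taylor_hasSum (hFmdiff m) (show ‖v‖ < R by linarith)
    have h5 := ht.mul_left (u ^ m * ((m.factorial : ℂ))⁻¹)
    convert h5 using 1
    · rfl
    funext n
    simp only [hT]
    rw [hPM m n]
    have hmne : ((m.factorial : ℂ)) ≠ 0 := Nat.cast_ne_zero.mpr m.factorial_ne_zero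
    have hnne : ((n.factorial : ℂ)) ≠ 0 := Nat.cast_ne_zero.mpr n.factorial_ne_zero
    field_simp
  have htot : HasSum (fun m => (u ^ m * ((m.factorial : ℂ))⁻¹) * Fm m v) (G u v) := by
    have ht := taylor_hasSum ((hGdiff_u v (by linarith)).mono ball_subset_closedBall)
      (show ‖u‖ < R by linarith)
    convert ht using 1
    funext m
    simp only [hFm]
    rw [div_eq_mul_inv]
    ring
  have H := hsum.hasSum
  have H2 := H.prod_fiberwise hfiber
  have hval : (∑' mn, T mn) = G u v := H2.unique htot
  have hval2 : (∑' mn, T mn) = f ((z + u) / (1 + w * u), (w + v) / (1 + z * v)) := by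
    rw [hval]
  exact hval2 ▸ H
end

section
/- Let U ⊆ O be open, let f : ℂ × ℂ → ℂ be holomorphic on U, let m, n ∈ ℕ, and let (z,w) ∈ ℂ × ℂ with (w,z) ∈ U. Define g : ℂ × ℂ → ℂ by g(u,v) := f(v,u) (so g is holomorphic on the swapped set, which contains (z,w)). Then D^{m,n} g(z,w) = D^{n,m} f(w,z). -/
open Complex Metric MeasureTheory intervalIntegral Set

/-- Cauchy coefficient formula: iterated derivative at the center as a circle integral. -/
lemma cauchyCoeff {ψ : ℂ → ℂ} {ρ : ℝ} (hρ : 0 < ρ)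
    (hψ : DifferentiableOn ℂ ψ (closedBall 0 ρ)) (k : ℕ) :
    iteratedDeriv k ψ 0 =
      (k.factorial : ℂ) * ((2 * Real.pi * I)⁻¹ * ∮ a in C(0, ρ), a⁻¹ ^ k * (a⁻¹ * ψ a)) := by
  lift ρ to NNReal using hρ.le with ρ' hρ'
  have hρ0 : 0 < ρ' := by exact_mod_cast hρ
  have H := hψ.hasFPowerSeriesOnBall hρ0
  have h1 := H.factorial_smul (y := (1 : ℂ)) k
  rw [iteratedDeriv_eq_iteratedFDeriv, ← h1, cauchyPowerSeries_apply]
  simp only [nsmul_eq_mul, smul_eq_mul, sub_zero, one_div]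

/-- Cauchy estimate for the derivative at the center of a disc. -/
lemma cauchyEst {ψ : ℂ → ℂ} {b : ℂ} {ρ M : ℝ} (hρ : 0 < ρ)
    (hψ : DifferentiableOn ℂ ψ (closedBall b ρ))
    (hM : ∀ x ∈ closedBall b ρ, ‖ψ x‖ ≤ M) :
    ‖deriv ψ b‖ ≤ M / ρ := by
  apply Complex.norm_deriv_le_of_forall_mem_sphere_norm_le hρ
  · refine DifferentiableOn.diffContOnCl ?_
    rwa [closure_ball b hρ.ne']
  · exact fun x hx => hM x (sphere_subset_closedBall hx)

open Filter Topology in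
/-- Measurability in a parameter of the derivative of a parametric family. -/
lemma aesm_deriv_param {F : ℝ → ℂ → ℂ} {a₀ : ℂ} {ε : ℝ} (hε : 0 < ε)
    (hd : ∀ t, DifferentiableAt ℂ (F t) a₀)
    (hc : ∀ a ∈ closedBall a₀ ε, Continuous fun t => F t a) (μ : Measure ℝ) :
    AEStronglyMeasurable (fun t => deriv (F t) a₀) μ := by
  have hseq : Tendsto (fun j : ℕ => a₀ + (ε : ℂ) / (j + 1)) atTop (𝓝[≠] a₀) := by
    rw [tendsto_nhdsWithin_iff]
    constructor
    · have h0 : Tendsto (fun j : ℕ => (ε : ℂ) / (j + 1)) atTop (𝓝 0) := by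
        rw [tendsto_zero_iff_norm_tendsto_zero]
        have heq : ∀ j : ℕ, ‖(ε : ℂ) / (j + 1)‖ = ε / (j + 1) := by
          intro j
          rw [norm_div]
          norm_cast
          rw [Real.norm_eq_abs, abs_of_pos hε]
        simp_rw [heq]
        exact ((tendsto_const_div_atTop_nhds_zero_nat ε).comp (tendsto_add_atTop_nat 1)).congr
          (fun j => by push_cast [Function.comp]; ring)
      simpa using tendsto_const_nhds.add h0
    · refine Eventually.of_forall fun j => ?_
      simp only [Set.mem_compl_iff, Set.mem_singleton_iff]
      intro h
      have : (ε : ℂ) / (j + 1) = 0 := by linear_combination h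
      simp [div_eq_zero_iff] at this
      rcases this with h1 | h2
      · exact hε.ne' (by exact_mod_cast h1)
      · exact_mod_cast h2
  apply aestronglyMeasurable_of_tendsto_ae atTop
    (f := fun (j : ℕ) (t : ℝ) => slope (F t) a₀ (a₀ + (ε : ℂ) / (j + 1)))
  · intro j
    apply Continuous.aestronglyMeasurable
    simp only [slope_def_field, div_eq_mul_inv]
    have hmem : a₀ + (ε : ℂ) / (j + 1) ∈ closedBall a₀ ε := by
      rw [mem_closedBall_iff_norm, add_sub_cancel_left, norm_div]
      have h1 : ‖((j : ℂ) + 1)‖ = (j : ℝ) + 1 := by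
        have : ((j : ℂ) + 1) = ((j + 1 : ℕ) : ℂ) := by push_cast; ring
        rw [this, Complex.norm_natCast]; push_cast; ring
      rw [h1, Complex.norm_real, Real.norm_eq_abs, abs_of_pos hε]
      rw [div_le_iff₀ (by positivity)]
      nlinarith [hε.le, Nat.cast_nonneg (α := ℝ) j]
    exact ((hc _ hmem).sub (hc a₀ (mem_closedBall_self hε.le))).mul continuous_const
  · refine Eventually.of_forall fun t => ?_
    exact (hasDerivAt_iff_tendsto_slope.mp (hd t).hasDerivAt).comp hseq

open Filter Topology Function in
/-- Differentiability in the parameter of a Cauchy-type circle integral. -/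
lemma diff_param {φ : ℂ → ℂ → ℂ} {r s s' : ℝ} (hr : 0 < r) (hs' : 0 < s') (hs's : s' < s)
    (k : ℕ)
    (Hcont : ContinuousOn (uncurry φ) (closedBall 0 r ×ˢ closedBall 0 s))
    (H1 : ∀ b ∈ closedBall 0 s, DifferentiableOn ℂ (fun a => φ a b) (closedBall 0 r)) :
    DifferentiableOn ℂ (fun a => ∮ b in C(0, s'), b⁻¹ ^ k * (b⁻¹ * φ a b)) (ball 0 r) := by
  obtain ⟨M, hM⟩ := ((isCompact_closedBall (0:ℂ) r).prod
    (isCompact_closedBall (0:ℂ) s)).exists_bound_of_continuousOn Hcont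
  set γ : ℝ → ℂ := fun t => circleMap 0 s' t with hγ
  have hγs : ∀ t, γ t ∈ closedBall (0:ℂ) s := by
    intro t
    rw [mem_closedBall_zero_iff]
    simp [hγ, norm_circleMap_zero, abs_of_pos hs', hs's.le]
  have hγball : ∀ t, γ t ∈ ball (0:ℂ) s := by
    intro t
    rw [mem_ball_zero_iff]
    simp [hγ, norm_circleMap_zero, abs_of_pos hs', hs's]
  have hγ0 : ∀ t, γ t ≠ 0 := fun t => circleMap_ne_center hs'.ne'
  set c : ℝ → ℂ := fun t => deriv (circleMap 0 s') t * ((γ t)⁻¹ ^ k * (γ t)⁻¹) with hc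
  have hccont : Continuous c := by
    rw [hc]
    simp only [deriv_circleMap]
    exact ((continuous_circleMap 0 s').mul continuous_const).mul
      ((((continuous_circleMap 0 s').inv₀ hγ0).pow k).mul
        ((continuous_circleMap 0 s').inv₀ hγ0))
  have hcnorm : ∀ t, ‖c t‖ = s' * ((s'⁻¹) ^ k * s'⁻¹) := by
    intro t
    have h1 : ‖γ t‖ = s' := by
      simp [hγ, norm_circleMap_zero, abs_of_pos hs']
    rw [hc]
    simp only [deriv_circleMap, norm_mul, norm_pow, norm_inv, norm_I, mul_one]
    rw [show ‖circleMap 0 s' t‖ = s' from h1]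
  set F : ℂ → ℝ → ℂ := fun a t => c t * φ a (γ t) with hF
  -- continuity in t of F a for a in the open ball
  have hFcont : ∀ a ∈ closedBall (0:ℂ) r, Continuous fun t => F a t := by
    intro a ha
    apply hccont.mul
    exact Hcont.comp_continuous (continuous_const.prodMk (continuous_circleMap 0 s'))
      (fun t => ⟨ha, hγs t⟩)
  intro a₀ ha₀
  have ha₀r : ‖a₀‖ < r := mem_ball_zero_iff.mp ha₀
  set ε : ℝ := (r - ‖a₀‖) / 2 with hεdef
  have hε : 0 < ε := by rw [hεdef]; linarith
  have hsub : ∀ x ∈ ball a₀ ε, closedBall x ε ⊆ closedBall (0:ℂ) r := by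
    intro x hx y hy
    rw [mem_closedBall_zero_iff]
    rw [mem_ball] at hx
    rw [mem_closedBall] at hy
    calc ‖y‖ = ‖y - x + (x - a₀) + a₀‖ := by ring_nf
      _ ≤ ‖y - x‖ + ‖x - a₀‖ + ‖a₀‖ := by
          exact (norm_add_le _ _).trans (by gcongr; exact norm_add_le _ _)
      _ ≤ ε + ε + ‖a₀‖ := by
          gcongr
          · exact mem_closedBall_iff_norm.mp hy
          · exact (mem_ball_iff_norm.mp hx).le
      _ ≤ r := by rw [hεdef]; linarith
  have hballr : ball a₀ ε ⊆ ball (0:ℂ) r := by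
    intro x hx
    rw [mem_ball_zero_iff]
    have h3 : ‖x‖ ≤ ‖x - a₀‖ + ‖a₀‖ := by simpa using norm_add_le (x - a₀) a₀
    have h4 : ‖x - a₀‖ < ε := mem_ball_iff_norm.mp hx
    rw [hεdef] at h4
    linarith
  set F' : ℂ → ℝ → ℂ := fun x t => c t * deriv (fun y => φ y (γ t)) x with hF'
  have key := intervalIntegral.hasDerivAt_integral_of_dominated_loc_of_deriv_le
    (F := F) (F' := F') (x₀ := a₀) (a := (0:ℝ)) (b := 2 * Real.pi)
    (μ := MeasureTheory.volume)
    (bound := fun _ => s' * ((s'⁻¹) ^ k * s'⁻¹) * (M / ε)) (Metric.ball_mem_nhds a₀ hε)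
    ?_ ?_ ?_ ?_ ?_ ?_
  · have : DifferentiableAt ℂ (fun a => ∫ t in (0:ℝ)..(2*Real.pi), F a t) a₀ :=
      key.2.differentiableAt
    have heqfun : (fun a => ∮ b in C(0, s'), b⁻¹ ^ k * (b⁻¹ * φ a b)) =
        (fun a => ∫ t in (0:ℝ)..(2*Real.pi), F a t) := by
      funext a
      rw [circleIntegral]
      apply intervalIntegral.integral_congr
      intro t _
      simp only [hF, hc, smul_eq_mul]
      ring
    rw [heqfun]
    exact this.differentiableWithinAt
  · -- hF_meas
    filter_upwards [isOpen_ball.mem_nhds (hballr (mem_ball_self hε))] with x hx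
    exact (hFcont x (ball_subset_closedBall hx)).aestronglyMeasurable
  · -- hF_int at a₀
    exact (hFcont a₀ (ball_subset_closedBall ha₀)).intervalIntegrable _ _
  · -- hF'_meas
    apply MeasureTheory.AEStronglyMeasurable.mul hccont.aestronglyMeasurable
    apply aesm_deriv_param hε
    · intro t
      refine (H1 (γ t) (hγs t) a₀ (ball_subset_closedBall ha₀)).differentiableAt ?_
      exact mem_of_superset (isOpen_ball.mem_nhds ha₀) ball_subset_closedBall
    · intro a ha
      have haball : a ∈ closedBall (0:ℂ) r := by
        rw [mem_closedBall_zero_iff]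
        have h3 : ‖a‖ ≤ ‖a - a₀‖ + ‖a₀‖ := by simpa using norm_add_le (a - a₀) a₀
        have h4 : ‖a - a₀‖ ≤ ε := mem_closedBall_iff_norm.mp ha
        rw [hεdef] at h4
        linarith
      exact Hcont.comp_continuous (continuous_const.prodMk (continuous_circleMap 0 s'))
        (fun t => ⟨haball, hγs t⟩)
  · -- h_bound
    refine Eventually.of_forall fun t _ => fun x hx => ?_
    have hψ : DifferentiableOn ℂ (fun y => φ y (γ t)) (closedBall x ε) :=
      (H1 (γ t) (hγs t)).mono (hsub x hx)
    have hMx : ∀ y ∈ closedBall x ε, ‖φ y (γ t)‖ ≤ M := by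
      intro y hy
      exact hM (y, γ t) ⟨hsub x hx hy, hγs t⟩
    have hest := cauchyEst hε hψ hMx
    rw [hF']
    simp only [norm_mul]
    rw [hcnorm t]
    exact mul_le_mul_of_nonneg_left hest (by positivity)
  · -- bound_integrable
    exact intervalIntegrable_const
  · -- h_diff
    refine Eventually.of_forall fun t _ => fun x hx => ?_
    have hdx : DifferentiableAt ℂ (fun y => φ y (γ t)) x := by
      refine (H1 (γ t) (hγs t) x (ball_subset_closedBall (hballr hx))).differentiableAt ?_
      exact mem_of_superset (isOpen_ball.mem_nhds (hballr hx)) ball_subset_closedBall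
    exact hdx.hasDerivAt.const_mul (c t)

open Function in
lemma interval_swap {G : ℝ → ℝ → ℂ} (hG : Continuous (uncurry G)) {a b : ℝ} (hab : a ≤ b) :
    ∫ t1 in a..b, ∫ t2 in a..b, G t1 t2 = ∫ t2 in a..b, ∫ t1 in a..b, G t1 t2 := by
  simp only [intervalIntegral.integral_of_le hab]
  apply MeasureTheory.integral_integral_swap
  rw [MeasureTheory.Measure.prod_restrict]
  refine MeasureTheory.IntegrableOn.mono_set ?_
    (Set.prod_mono Set.Ioc_subset_Icc_self Set.Ioc_subset_Icc_self)
  exact hG.continuousOn.integrableOn_compact (isCompact_Icc.prod isCompact_Icc)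

open Function in
/-- Symmetry of mixed iterated partial derivatives for separately holomorphic,
jointly continuous functions on a closed polydisc. -/
lemma swapLemma {φ : ℂ → ℂ → ℂ} {r : ℝ} (hr : 0 < r) (m n : ℕ)
    (Hcont : ContinuousOn (uncurry φ) (closedBall 0 r ×ˢ closedBall 0 r))
    (H1 : ∀ b ∈ closedBall (0:ℂ) r, DifferentiableOn ℂ (fun a => φ a b) (closedBall 0 r))
    (H2 : ∀ a ∈ closedBall (0:ℂ) r, DifferentiableOn ℂ (fun b => φ a b) (closedBall 0 r)) :
    iteratedDeriv n (fun a => iteratedDeriv m (fun b => φ a b) 0) 0 =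
      iteratedDeriv m (fun b => iteratedDeriv n (fun a => φ a b) 0) 0 := by
  have hρ : (0:ℝ) < r / 2 := by linarith
  have hρr : r / 2 < r := by linarith
  have hρle : closedBall (0:ℂ) (r/2) ⊆ closedBall 0 r :=
    closedBall_subset_closedBall (by linarith)
  set K : ℂ := (2 * Real.pi * Complex.I)⁻¹ with hK
  set γ : ℝ → ℂ := fun t => circleMap 0 (r/2) t with hγdef
  have hγmem : ∀ t, γ t ∈ closedBall (0:ℂ) r := by
    intro t
    rw [mem_closedBall_zero_iff]
    simp [hγdef, norm_circleMap_zero, abs_of_pos hρ]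
    linarith
  have hγ0 : ∀ t, γ t ≠ 0 := fun t => circleMap_ne_center hρ.ne'
  have hγcont : Continuous γ := continuous_circleMap 0 (r/2)
  set c1 : ℝ → ℂ := fun t => deriv (circleMap 0 (r/2)) t * ((γ t)⁻¹ ^ n * (γ t)⁻¹) with hc1
  set c2 : ℝ → ℂ := fun t => deriv (circleMap 0 (r/2)) t * ((γ t)⁻¹ ^ m * (γ t)⁻¹) with hc2
  have hc1cont : Continuous c1 := by
    rw [hc1]; simp only [deriv_circleMap]
    exact ((hγcont.mul continuous_const).mul
      (((hγcont.inv₀ hγ0).pow n).mul (hγcont.inv₀ hγ0)))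
  have hc2cont : Continuous c2 := by
    rw [hc2]; simp only [deriv_circleMap]
    exact ((hγcont.mul continuous_const).mul
      (((hγcont.inv₀ hγ0).pow m).mul (hγcont.inv₀ hγ0)))
  set G : ℝ → ℝ → ℂ := fun t1 t2 => c1 t1 * (c2 t2 * φ (γ t1) (γ t2)) with hG
  have hGcont : Continuous (uncurry G) := by
    have hφγγ : Continuous fun p : ℝ × ℝ => φ (γ p.1) (γ p.2) :=
      Hcont.comp_continuous ((hγcont.comp continuous_fst).prodMk (hγcont.comp continuous_snd))
        (fun p => ⟨hγmem p.1, hγmem p.2⟩)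
    exact (hc1cont.comp continuous_fst).mul ((hc2cont.comp continuous_snd).mul hφγγ)
  -- inner representations
  have inner1 : ∀ a ∈ closedBall (0:ℂ) r, iteratedDeriv m (fun b => φ a b) 0 =
      (m.factorial : ℂ) * (K * ∮ b in C(0, r/2), b⁻¹ ^ m * (b⁻¹ * φ a b)) :=
    fun a ha => cauchyCoeff hρ ((H2 a ha).mono hρle) m
  have inner2 : ∀ b ∈ closedBall (0:ℂ) r, iteratedDeriv n (fun a => φ a b) 0 =
      (n.factorial : ℂ) * (K * ∮ a in C(0, r/2), a⁻¹ ^ n * (a⁻¹ * φ a b)) :=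
    fun b hb => cauchyCoeff hρ ((H1 b hb).mono hρle) n
  -- differentiability of the two inner-derivative functions
  have hdiffL : DifferentiableOn ℂ (fun a => iteratedDeriv m (fun b => φ a b) 0)
      (closedBall 0 (r/2)) := by
    have hq := diff_param hr hρ hρr m Hcont H1
    have : DifferentiableOn ℂ
        (fun a => (m.factorial : ℂ) * (K * ∮ b in C(0, r/2), b⁻¹ ^ m * (b⁻¹ * φ a b)))
        (ball 0 r) := (hq.const_mul K).const_mul _
    refine (this.congr ?_).mono (closedBall_subset_ball hρr)
    exact fun a ha => inner1 a (ball_subset_closedBall ha)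
  have hdiffR : DifferentiableOn ℂ (fun b => iteratedDeriv n (fun a => φ a b) 0)
      (closedBall 0 (r/2)) := by
    have Hcont' : ContinuousOn (uncurry (fun b a => φ a b))
        (closedBall 0 r ×ˢ closedBall 0 r) := by
      have hswap : ContinuousOn (Prod.swap : ℂ × ℂ → ℂ × ℂ)
          (closedBall (0:ℂ) r ×ˢ closedBall (0:ℂ) r) := continuous_swap.continuousOn
      exact Hcont.comp hswap (fun p hp => ⟨hp.2, hp.1⟩)
    have hq := diff_param hr hρ hρr n Hcont' H2
    have : DifferentiableOn ℂ
        (fun b => (n.factorial : ℂ) * (K * ∮ a in C(0, r/2), a⁻¹ ^ n * (a⁻¹ * φ a b)))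
        (ball 0 r) := (hq.const_mul K).const_mul _
    refine (this.congr ?_).mono (closedBall_subset_ball hρr)
    exact fun b hb => inner2 b (ball_subset_closedBall hb)
  -- outer representations
  have LHS1 := cauchyCoeff hρ hdiffL n
  have RHS1 := cauchyCoeff hρ hdiffR m
  rw [LHS1, RHS1]
  -- rewrite the integrands on the spheres
  have Lcirc : (∮ a in C(0, r/2), a⁻¹ ^ n * (a⁻¹ * iteratedDeriv m (fun b => φ a b) 0)) =
      ∮ a in C(0, r/2), a⁻¹ ^ n * (a⁻¹ *
        ((m.factorial : ℂ) * (K * ∮ b in C(0, r/2), b⁻¹ ^ m * (b⁻¹ * φ a b)))) := by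
    apply circleIntegral.integral_congr hρ.le
    intro a ha
    have : a ∈ closedBall (0:ℂ) r := hρle (sphere_subset_closedBall ha)
    beta_reduce
    rw [inner1 a this]
  have Rcirc : (∮ b in C(0, r/2), b⁻¹ ^ m * (b⁻¹ * iteratedDeriv n (fun a => φ a b) 0)) =
      ∮ b in C(0, r/2), b⁻¹ ^ m * (b⁻¹ *
        ((n.factorial : ℂ) * (K * ∮ a in C(0, r/2), a⁻¹ ^ n * (a⁻¹ * φ a b)))) := by
    apply circleIntegral.integral_congr hρ.le
    intro b hb
    have : b ∈ closedBall (0:ℂ) r := hρle (sphere_subset_closedBall hb)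
    beta_reduce
    rw [inner2 b this]
  rw [Lcirc, Rcirc]
  -- convert both sides to double interval integrals
  have L2 : (∮ a in C(0, r/2), a⁻¹ ^ n * (a⁻¹ *
        ((m.factorial : ℂ) * (K * ∮ b in C(0, r/2), b⁻¹ ^ m * (b⁻¹ * φ a b))))) =
      ((m.factorial : ℂ) * K) *
        ∫ t1 in (0:ℝ)..(2*Real.pi), ∫ t2 in (0:ℝ)..(2*Real.pi), G t1 t2 := by
    rw [circleIntegral]
    rw [← intervalIntegral.integral_const_mul]
    apply intervalIntegral.integral_congr
    intro t1 _
    beta_reduce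
    have h2 : (∮ b in C(0, r/2), b⁻¹ ^ m * (b⁻¹ * φ (γ t1) b)) =
        ∫ t2 in (0:ℝ)..(2*Real.pi), c2 t2 * φ (γ t1) (γ t2) := by
      rw [circleIntegral]
      apply intervalIntegral.integral_congr
      intro t2 _
      simp only [smul_eq_mul, hc2, hγdef]
      ring
    have h3 : (∫ t2 in (0:ℝ)..(2*Real.pi), G t1 t2) =
        c1 t1 * ∫ t2 in (0:ℝ)..(2*Real.pi), c2 t2 * φ (γ t1) (γ t2) := by
      rw [← intervalIntegral.integral_const_mul]
    rw [h3, ← h2]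
    simp only [smul_eq_mul, hc1, hγdef]
    ring
  have R2 : (∮ b in C(0, r/2), b⁻¹ ^ m * (b⁻¹ *
        ((n.factorial : ℂ) * (K * ∮ a in C(0, r/2), a⁻¹ ^ n * (a⁻¹ * φ a b))))) =
      ((n.factorial : ℂ) * K) *
        ∫ t2 in (0:ℝ)..(2*Real.pi), ∫ t1 in (0:ℝ)..(2*Real.pi), G t1 t2 := by
    rw [circleIntegral]
    rw [← intervalIntegral.integral_const_mul]
    apply intervalIntegral.integral_congr
    intro t2 _
    beta_reduce
    have h2 : (∮ a in C(0, r/2), a⁻¹ ^ n * (a⁻¹ * φ a (γ t2))) =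
        ∫ t1 in (0:ℝ)..(2*Real.pi), c1 t1 * φ (γ t1) (γ t2) := by
      rw [circleIntegral]
      apply intervalIntegral.integral_congr
      intro t1 _
      simp only [smul_eq_mul, hc1, hγdef]
      ring
    have h3 : (∫ t1 in (0:ℝ)..(2*Real.pi), G t1 t2) =
        c2 t2 * ∫ t1 in (0:ℝ)..(2*Real.pi), c1 t1 * φ (γ t1) (γ t2) := by
      rw [← intervalIntegral.integral_const_mul]
      apply intervalIntegral.integral_congr
      intro t1 _
      beta_reduce
      simp only [hG]
      ring
    rw [h3, ← h2]
    simp only [smul_eq_mul, hc2, hγdef]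
    ring
  rw [L2, R2]
  rw [interval_swap hGcont (by positivity)]
  ring

/-- swap symmetry `D^{m,n} g(z,w) = D^{n,m} f(w,z)` for `g(u,v) = f(v,u)`. -/
theorem stmt2 (U : Set (ℂ × ℂ)) (hU : IsOpen U) (hUO : U ⊆ Oset)
    (f : ℂ × ℂ → ℂ) (hf : DifferentiableOn ℂ f U) (m n : ℕ)
    (z w : ℂ) (hwz : (w, z) ∈ U)
    (g : ℂ × ℂ → ℂ) (hg : g = fun p => f (p.2, p.1)) :
    PM m n g z w = PM n m f w z := by
  subst hg
  set T : ℂ × ℂ → ℂ × ℂ :=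
    fun p => ((w + p.1) / (1 + z * p.1), (z + p.2) / (1 + w * p.2)) with hT
  set V : Set (ℂ × ℂ) := {p | 1 + z * p.1 ≠ 0 ∧ 1 + w * p.2 ≠ 0} with hV
  have hVopen : IsOpen V := by
    rw [hV, Set.setOf_and]
    refine IsOpen.inter ?_ ?_
    · exact isOpen_compl_singleton.preimage (by fun_prop)
    · exact isOpen_compl_singleton.preimage (by fun_prop)
  have hTcont : ContinuousOn T V := by
    apply ContinuousOn.prodMk
    · exact ContinuousOn.div (by fun_prop) (by fun_prop) (fun p hp => hp.1)
    · exact ContinuousOn.div (by fun_prop) (by fun_prop) (fun p hp => hp.2)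
  have hW : IsOpen (V ∩ T ⁻¹' U) := hTcont.isOpen_inter_preimage hVopen hU
  have h00 : ((0:ℂ), (0:ℂ)) ∈ V ∩ T ⁻¹' U := by
    constructor
    · rw [hV]; constructor <;> simp
    · show T (0, 0) ∈ U
      rw [hT]
      simp only [mul_zero, add_zero, div_one]
      exact hwz
  obtain ⟨r, hrpos, hball⟩ : ∃ r > 0, closedBall ((0:ℂ), (0:ℂ)) r ⊆ V ∩ T ⁻¹' U := by
    rcases Metric.isOpen_iff.mp hW _ h00 with ⟨ε, hε, hsub⟩
    exact ⟨ε / 2, by linarith, (closedBall_subset_ball (by linarith)).trans hsub⟩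
  set φ : ℂ → ℂ → ℂ := fun a b => f ((w + a) / (1 + z * a), (z + b) / (1 + w * b)) with hφ
  have hprod : closedBall (0:ℂ) r ×ˢ closedBall (0:ℂ) r ⊆ V ∩ T ⁻¹' U := by
    rw [closedBall_prod_same]
    exact hball
  have Hcont : ContinuousOn (Function.uncurry φ) (closedBall 0 r ×ˢ closedBall 0 r) := by
    have heq : Function.uncurry φ = f ∘ T := rfl
    rw [heq]
    exact ContinuousOn.comp hf.continuousOn
      (hTcont.mono fun p hp => (hprod hp).1)
      (fun p hp => (hprod hp).2)
  have H1 : ∀ b ∈ closedBall (0:ℂ) r, DifferentiableOn ℂ (fun a => φ a b) (closedBall 0 r) := by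
    intro b hb a ha
    have hmem := hprod (Set.mk_mem_prod ha hb)
    have hTa : DifferentiableAt ℂ
        (fun a : ℂ => (((w + a) / (1 + z * a), (z + b) / (1 + w * b)) : ℂ × ℂ)) a := by
      apply DifferentiableAt.prodMk
      · exact DifferentiableAt.div (by fun_prop) (by fun_prop) hmem.1.1
      · exact differentiableAt_const _
    have hfd : DifferentiableWithinAt ℂ f U (T (a, b)) := hf _ hmem.2
    have hmaps : Set.MapsTo (fun a : ℂ => T (a, b)) (closedBall 0 r) U :=
      fun a' ha' => (hprod (Set.mk_mem_prod ha' hb)).2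
    exact DifferentiableWithinAt.comp a hfd hTa.differentiableWithinAt hmaps
  have H2 : ∀ a ∈ closedBall (0:ℂ) r, DifferentiableOn ℂ (fun b => φ a b) (closedBall 0 r) := by
    intro a ha b hb
    have hmem := hprod (Set.mk_mem_prod ha hb)
    have hTb : DifferentiableAt ℂ
        (fun b : ℂ => (((w + a) / (1 + z * a), (z + b) / (1 + w * b)) : ℂ × ℂ)) b := by
      apply DifferentiableAt.prodMk
      · exact differentiableAt_const _
      · exact DifferentiableAt.div (by fun_prop) (by fun_prop) hmem.1.2
    have hfd : DifferentiableWithinAt ℂ f U (T (a, b)) := hf _ hmem.2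
    have hmaps : Set.MapsTo (fun b : ℂ => T (a, b)) (closedBall 0 r) U :=
      fun b' hb' => (hprod (Set.mk_mem_prod ha hb')).2
    exact DifferentiableWithinAt.comp b hfd hTb.differentiableWithinAt hmaps
  exact swapLemma hrpos m n Hcont H1 H2
end

section
/- Let U ⊆ O be open, let f : ℂ × ℂ → ℂ be holomorphic on U, let m, n ∈ ℕ with m ≥ 1 and n ≥ 1, and let (z,w) ∈ U with z ≠ 0 and w ≠ 0. Then D^{n,m} f(z,w) = Σ_{j=1}^{n} Σ_{k=1}^{m} (∂₁^j ∂₂^k f)(z,w) · (1 − z·w)^{j+k} · (n!·m!/(j!·k!)) · binom(n−1, j−1) · binom(m−1, k−1) · (−w)^{n−j} · (−z)^{m−k}, where ∂₁^j ∂₂^k f(z,w) := iteratedDeriv k (fun b => iteratedDeriv j (fun a => f(a,b)) z) w denotes the iterated complex partial derivative of order j in the first and k in the second variable. -/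
/-!
For `T(u) = (z + u) / (1 + w u)` one has `T' = (1 - z w) (1 + w u)⁻²` and
`((1 + w u)⁻¹)' = -w (1 + w u)⁻²`, so by induction the `n`-th derivative of `g ∘ T` is
`∑ⱼ L(n, j) (-w)^(n-j) (1 - z w)^j (g⁽ʲ⁾ ∘ T) (1 + w u)^(-(n+j))`, where the coefficients obey
the recurrence of the Lah numbers `L(n, j) = n!/j! · C(n-1, j-1)`. Applying this in `u` for fixed
`v`, and then in `v` to `b ↦ ∂₁ʲ f(z, b)`, gives the formula. That `b ↦ ∂₁ʲ f(z, b)` is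
holomorphic follows from the Cauchy integral formula for `∂₁ʲ f`, differentiated under the
integral sign; the `b`-derivative of the integrand is bounded by Cauchy's estimate.
-/

open Finset Metric Complex

def lah : ℕ → ℕ → ℕ
  | 0, 0 => 1
  | 0, _ + 1 => 0
  | _ + 1, 0 => 0
  | n + 1, j + 1 => lah n j + (n + j + 1) * lah n (j + 1)

theorem lah_eq_zero_of_lt : ∀ {n j : ℕ}, n < j → lah n j = 0
  | 0, _ + 1, _ => rfl
  | n + 1, j + 1, h => by
    simp [lah, lah_eq_zero_of_lt (by omega : n < j), lah_eq_zero_of_lt (by omega : n < j + 1)]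

theorem lah_succ_succ_mul_factorial (n j : ℕ) :
    lah (n + 1) (j + 1) * (j + 1).factorial = (n + 1).factorial * n.choose j := by
  induction n generalizing j with
  | zero => cases j <;> simp [lah]
  | succ n ih =>
    cases j with
    | zero =>
      have h := ih 0
      simp only [lah, zero_add, Nat.factorial_one, mul_one, Nat.choose_zero_right] at h ⊢
      rw [Nat.factorial_succ (n + 1), ← h]
    | succ i =>
      have hchoose : (i + 2) * n.choose i + (n + i + 3) * n.choose (i + 1) =
          (n + 2) * (n.choose i + n.choose (i + 1)) := by
        rcases le_or_gt i n with hi | hi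
        · have h := Nat.choose_succ_right_eq n i
          zify [hi] at h ⊢
          linear_combination h
        · simp [Nat.choose_eq_zero_of_lt hi, Nat.choose_eq_zero_of_lt (hi.trans i.lt_succ_self)]
      calc lah (n + 2) (i + 2) * (i + 2).factorial
          = (i + 2) * (lah (n + 1) (i + 1) * (i + 1).factorial) +
              (n + i + 3) * (lah (n + 1) (i + 2) * (i + 2).factorial) := by
            rw [lah, Nat.factorial_succ (i + 1)]; ring
        _ = (n + 1).factorial * ((i + 2) * n.choose i + (n + i + 3) * n.choose (i + 1)) := by
            rw [ih, ih]; ring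
        _ = (n + 2).factorial * (n + 1).choose (i + 1) := by
            rw [hchoose, Nat.factorial_succ (n + 1), Nat.choose_succ_succ]; ring

theorem cast_lah_succ_succ {K : Type*} [Field K] [CharZero K] (n j : ℕ) :
    (lah (n + 1) (j + 1) : K) = (n + 1).factorial / (j + 1).factorial * n.choose j := by
  rw [div_mul_eq_mul_div, eq_div_iff (Nat.cast_ne_zero.mpr (Nat.factorial_ne_zero _))]
  exact_mod_cast lah_succ_succ_mul_factorial n j

theorem sum_lah_succ {R : Type*} [CommSemiring R] (a : ℕ → R) (x : R) (n : ℕ) :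
    ∑ j ∈ range (n + 2), lah (n + 1) j * x ^ (n + 1 - j) * a j =
      ∑ j ∈ range (n + 1), lah n j * x ^ (n - j) * (a (j + 1) + (n + j) * x * a j) := by
  have hshift :
      ∑ j ∈ range (n + 1), ((n + j + 1 : ℕ) : R) * lah n (j + 1) * x ^ (n - j) * a (j + 1) =
        ∑ j ∈ range (n + 1), ((n + j : ℕ) : R) * lah n j * x ^ (n - j + 1) * a j := by
    have hzero : ((n + 0 : ℕ) : R) * lah n 0 = 0 := by cases n <;> simp [lah]
    rw [sum_range_succ, lah_eq_zero_of_lt n.lt_succ_self, sum_range_succ', hzero]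
    simp only [Nat.cast_zero, mul_zero, zero_mul, add_zero]
    refine sum_congr rfl fun j hj => ?_
    rw [show n - j = n - (j + 1) + 1 by have := mem_range.mp hj; omega]
    ring_nf
  calc ∑ j ∈ range (n + 2), (lah (n + 1) j : R) * x ^ (n + 1 - j) * a j
      = ∑ j ∈ range (n + 1), ((lah n j : R) * x ^ (n - j) * a (j + 1) +
          ((n + j + 1 : ℕ) : R) * lah n (j + 1) * x ^ (n - j) * a (j + 1)) := by
        rw [sum_range_succ']
        simp only [lah, Nat.add_sub_add_right, Nat.cast_zero, zero_mul, add_zero]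
        exact sum_congr rfl fun j _ => by push_cast; ring
    _ = ∑ j ∈ range (n + 1), ((lah n j : R) * x ^ (n - j) * a (j + 1) +
          ((n + j : ℕ) : R) * lah n j * x ^ (n - j + 1) * a j) := by
        rw [sum_add_distrib, hshift, sum_add_distrib]
    _ = _ := sum_congr rfl fun j _ => by push_cast; ring

section Mobius

variable {z w u : ℂ}

theorem hasDerivAt_one_add_mul (w u : ℂ) : HasDerivAt (fun x => 1 + w * x) w u := by
  simpa using ((hasDerivAt_id u).const_mul w).const_add 1

theorem hasDerivAt_mobius (hu : 1 + w * u ≠ 0) :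
    HasDerivAt (fun x => (z + x) / (1 + w * x)) ((1 - z * w) * (1 + w * u)⁻¹ ^ 2) u := by
  refine (((hasDerivAt_id' u).const_add z).fun_div (hasDerivAt_one_add_mul w u) hu).congr_deriv ?_
  field_simp
  ring

theorem hasDerivAt_inv_one_add_mul_pow (hu : 1 + w * u ≠ 0) (k : ℕ) :
    HasDerivAt (fun x => (1 + w * x)⁻¹ ^ k) (k * -w * (1 + w * u)⁻¹ ^ (k + 1)) u := by
  refine (((hasDerivAt_one_add_mul w u).fun_inv hu).fun_pow k).congr_deriv ?_
  rcases k with _ | k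
  · simp
  · rw [Nat.add_sub_cancel, div_eq_mul_inv, ← inv_pow]
    ring

variable {g : ℂ → ℂ} {V : Set ℂ}

theorem hasDerivAt_mobius_term (hV : IsOpen V) (hg : DifferentiableOn ℂ g V)
    (hu : 1 + w * u ≠ 0) (huV : (z + u) / (1 + w * u) ∈ V) (j k : ℕ) :
    HasDerivAt (fun x => (1 - z * w) ^ j * iteratedDeriv j g ((z + x) / (1 + w * x)) *
        (1 + w * x)⁻¹ ^ k)
      ((1 - z * w) ^ (j + 1) * iteratedDeriv (j + 1) g ((z + u) / (1 + w * u)) *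
          (1 + w * u)⁻¹ ^ (k + 2) +
        k * -w * ((1 - z * w) ^ j * iteratedDeriv j g ((z + u) / (1 + w * u)) *
          (1 + w * u)⁻¹ ^ (k + 1))) u := by
  have hgj : HasDerivAt (iteratedDeriv j g) (iteratedDeriv (j + 1) g ((z + u) / (1 + w * u)))
      ((z + u) / (1 + w * u)) := by
    have han := (hg.analyticOnNhd hV).iterated_deriv j
    rw [← iteratedDeriv_eq_iterate] at han
    rw [iteratedDeriv_succ]
    exact (han _ huV).differentiableAt.hasDerivAt
  refine (((hgj.comp u (hasDerivAt_mobius hu)).const_mul ((1 - z * w) ^ j)).fun_mul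
    (hasDerivAt_inv_one_add_mul_pow hu k)).congr_deriv ?_
  simp only [Function.comp_apply]
  ring

theorem iteratedDeriv_comp_mobius (hV : IsOpen V) (hg : DifferentiableOn ℂ g V) (n : ℕ)
    (hu : 1 + w * u ≠ 0) (huV : (z + u) / (1 + w * u) ∈ V) :
    iteratedDeriv n (fun x => g ((z + x) / (1 + w * x))) u =
      ∑ j ∈ range (n + 1), lah n j * (-w) ^ (n - j) *
        ((1 - z * w) ^ j * iteratedDeriv j g ((z + u) / (1 + w * u)) *
          (1 + w * u)⁻¹ ^ (n + j)) := by
  induction n generalizing u with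
  | zero => simp [lah]
  | succ n ih =>
    have hW : IsOpen {x | 1 + w * x ≠ 0 ∧ (z + x) / (1 + w * x) ∈ V} := by
      have hden : IsOpen {x : ℂ | 1 + w * x ≠ 0} := isOpen_ne_fun (by fun_prop) (by fun_prop)
      exact ContinuousOn.isOpen_inter_preimage
        ((continuousOn_const.add continuousOn_id).div (by fun_prop) fun x hx => hx) hden hV
    have hloc : iteratedDeriv n (fun x => g ((z + x) / (1 + w * x))) =ᶠ[nhds u]
        fun x => ∑ j ∈ range (n + 1), lah n j * (-w) ^ (n - j) *
          ((1 - z * w) ^ j * iteratedDeriv j g ((z + x) / (1 + w * x)) *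
            (1 + w * x)⁻¹ ^ (n + j)) :=
      Filter.eventually_of_mem (hW.mem_nhds ⟨hu, huV⟩) fun x hx => ih hx.1 hx.2
    rw [iteratedDeriv_succ, hloc.deriv_eq, (HasDerivAt.fun_sum fun j _ =>
        (hasDerivAt_mobius_term hV hg hu huV j (n + j)).const_mul _).deriv,
      sum_lah_succ (fun j => (1 - z * w) ^ j * iteratedDeriv j g ((z + u) / (1 + w * u)) *
        (1 + w * u)⁻¹ ^ (n + 1 + j))]
    refine sum_congr rfl fun j _ => ?_
    rw [show n + 1 + (j + 1) = n + j + 2 by ring, show n + 1 + j = n + j + 1 by ring]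
    push_cast
    ring

theorem iteratedDeriv_comp_mobius_zero (hV : IsOpen V) (hg : DifferentiableOn ℂ g V)
    (hzV : z ∈ V) {n : ℕ} (hn : 1 ≤ n) :
    iteratedDeriv n (fun x => g ((z + x) / (1 + w * x))) 0 =
      ∑ j ∈ Icc 1 n, iteratedDeriv j g z * (1 - z * w) ^ j *
        ((n.factorial : ℂ) / j.factorial * (n - 1).choose (j - 1)) * (-w) ^ (n - j) := by
  obtain ⟨n, rfl⟩ := Nat.exists_eq_add_of_le' hn
  rw [iteratedDeriv_comp_mobius hV hg _ (by simp) (by simpa using hzV), sum_range_succ',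
    ← Ico_add_one_right_eq_Icc, sum_Ico_eq_sum_range]
  simp only [show lah (n + 1) 0 = 0 from rfl, mul_zero, add_zero, div_one, inv_one, one_pow,
    mul_one, Nat.cast_zero, zero_mul]
  refine sum_congr (by simp) fun j _ => ?_
  rw [cast_lah_succ_succ, add_comm 1 j]
  simp only [Nat.add_sub_cancel]
  ring

end Mobius

section CircleIntegralParam

variable {E : Type*} [NormedAddCommGroup E] [NormedSpace ℂ E]

theorem continuous_deriv_circleMap (c : ℂ) (R : ℝ) : Continuous (deriv (circleMap c R)) := by
  simp only [funext (deriv_circleMap c R)]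
  fun_prop

theorem continuousOn_circleIntegral_of_continuousOn {X : Type*} [TopologicalSpace X]
    {F : X → ℂ → E} {s : Set X} {c : ℂ} {R : ℝ} (hR : 0 ≤ R)
    (hF : ContinuousOn (Function.uncurry F) (s ×ˢ sphere c R)) :
    ContinuousOn (fun x => ∮ ζ in C(c, R), F x ζ) s := by
  rw [continuousOn_iff_continuous_domRestrict]
  refine intervalIntegral.continuous_parametric_intervalIntegral_of_continuous'
    (f := fun (x : s) θ => deriv (circleMap c R) θ • F x (circleMap c R θ)) ?_ 0 (2 * Real.pi)
  refine ((continuous_deriv_circleMap c R).comp continuous_snd).smul ?_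
  exact hF.comp_continuous ((continuous_subtype_val.comp continuous_fst).prodMk
    ((continuous_circleMap c R).comp continuous_snd)) fun p => ⟨p.1.2, circleMap_mem_sphere c hR _⟩

variable [CompleteSpace E] {f : ℂ × ℂ → E} {b : ℂ} {r : ℝ}

theorem continuousOn_deriv_snd {s : Set ℂ} (hr : 0 < r)
    (hf : ContinuousOn f (s ×ˢ closedBall b r))
    (hfd : ∀ ζ ∈ s, DifferentiableOn ℂ (fun y => f (ζ, y)) (closedBall b r)) :
    ContinuousOn (fun ζ => deriv (fun y => f (ζ, y)) b) s := by
  have hcauchy : ∀ ζ ∈ s, deriv (fun y => f (ζ, y)) b =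
      (2 * Real.pi * I)⁻¹ • ∮ η in C(b, r), (1 / (η - b) ^ 2) • f (ζ, η) := fun ζ hζ => by
    rw [(hfd ζ hζ).deriv_eq_smul_circleIntegral hr, inv_smul_smul₀ two_pi_I_ne_zero]
  refine ContinuousOn.congr (ContinuousOn.const_smul ?_ _) hcauchy
  refine continuousOn_circleIntegral_of_continuousOn (F := fun ζ η => (1 / (η - b) ^ 2) • f (ζ, η))
    hr.le (ContinuousOn.smul ?_ (hf.mono (Set.prod_mono le_rfl sphere_subset_closedBall)))
  refine continuousOn_const.div (by fun_prop) fun p hp => pow_ne_zero _ (sub_ne_zero.mpr ?_)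
  exact ne_of_mem_sphere hp.2 hr.ne'

theorem differentiableAt_circleIntegral_of_differentiableOn_snd {c : ℂ} {R : ℝ} (hR : 0 ≤ R)
    (hr : 0 < r) (hf : ContinuousOn f (sphere c R ×ˢ closedBall b r))
    (hfd : ∀ ζ ∈ sphere c R, DifferentiableOn ℂ (fun y => f (ζ, y)) (closedBall b r)) :
    DifferentiableAt ℂ (fun y => ∮ ζ in C(c, R), f (ζ, y)) b := by
  have hr2 : 0 < r / 2 := half_pos hr
  have hcirc : ∀ θ, circleMap c R θ ∈ sphere c R := circleMap_mem_sphere c hR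
  obtain ⟨M, hM⟩ :=
    ((isCompact_sphere c R).prod (isCompact_closedBall b r)).exists_bound_of_continuousOn hf
  have hderiv_le : ∀ ζ ∈ sphere c R, ∀ y ∈ ball b (r / 2),
      ‖deriv (fun y => f (ζ, y)) y‖ ≤ M / (r / 2) := by
    intro ζ hζ y hy
    have hsub : closedBall y (r / 2) ⊆ closedBall b r :=
      closedBall_subset_closedBall' (by rw [mem_ball] at hy; linarith)
    refine norm_deriv_le_of_forall_mem_sphere_norm_le hr2
      (((hfd ζ hζ).mono (closure_ball_subset_closedBall.trans hsub)).diffContOnCl) fun η hη => ?_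
    exact hM _ ⟨hζ, hsub (sphere_subset_closedBall hη)⟩
  have hFcont : ∀ y ∈ closedBall b r,
      Continuous fun θ => deriv (circleMap c R) θ • f (circleMap c R θ, y) := fun y hy =>
    (continuous_deriv_circleMap c R).smul (hf.comp_continuous
      ((continuous_circleMap c R).prodMk continuous_const) fun θ => ⟨hcirc θ, hy⟩)
  have hF'cont : Continuous fun θ =>
      deriv (circleMap c R) θ • deriv (fun y => f (circleMap c R θ, y)) b :=
    (continuous_deriv_circleMap c R).smul
      ((continuousOn_deriv_snd hr hf hfd).comp_continuous (continuous_circleMap c R) hcirc)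
  have key := intervalIntegral.hasDerivAt_integral_of_dominated_loc_of_deriv_le
    (F := fun y θ => deriv (circleMap c R) θ • f (circleMap c R θ, y))
    (F' := fun y θ => deriv (circleMap c R) θ • deriv (fun y => f (circleMap c R θ, y)) y)
    (bound := fun _ => |R| * (M / (r / 2))) (a := 0) (b := 2 * Real.pi)
    (μ := MeasureTheory.volume) (ball_mem_nhds b hr2)
    (Filter.eventually_of_mem (ball_mem_nhds b hr) fun y hy =>
      (hFcont y (ball_subset_closedBall hy)).aestronglyMeasurable)
    ((hFcont b (mem_closedBall_self hr.le)).intervalIntegrable _ _)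
    hF'cont.aestronglyMeasurable ?_ intervalIntegrable_const ?_
  · exact key.2.differentiableAt
  · refine Filter.Eventually.of_forall fun θ _ y hy => ?_
    rw [norm_smul, deriv_circleMap, norm_mul, norm_circleMap_zero, norm_I, mul_one]
    exact mul_le_mul_of_nonneg_left (hderiv_le _ (hcirc θ) y hy) (abs_nonneg R)
  · refine Filter.Eventually.of_forall fun θ _ y hy => ?_
    have hy' : closedBall b r ∈ nhds y :=
      closedBall_mem_nhds_of_mem (ball_subset_ball (half_le_self hr.le) hy)
    exact ((hfd _ (hcirc θ)).differentiableAt hy').hasDerivAt.const_smul _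

theorem exists_closedBall_prod_subset {U : Set (ℂ × ℂ)} (hU : IsOpen U) {a b : ℂ}
    (hab : (a, b) ∈ U) : ∃ r > 0, closedBall a r ×ˢ closedBall b r ⊆ U := by
  obtain ⟨ε, hε, hball⟩ := Metric.isOpen_iff.mp hU _ hab
  refine ⟨ε / 2, half_pos hε, ?_⟩
  rw [closedBall_prod_same]
  exact (closedBall_subset_ball (half_lt_self hε)).trans hball

theorem differentiableAt_iteratedDeriv_fst {U : Set (ℂ × ℂ)} (hU : IsOpen U)
    (hf : DifferentiableOn ℂ f U) {a : ℂ} (hab : (a, b) ∈ U) (j : ℕ) :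
    DifferentiableAt ℂ (fun y => iteratedDeriv j (fun x => f (x, y)) a) b := by
  obtain ⟨r, hr, hsub⟩ := exists_closedBall_prod_subset hU hab
  have hcauchy : ∀ y ∈ closedBall b r, iteratedDeriv j (fun x => f (x, y)) a =
      (2 * Real.pi * I / j.factorial)⁻¹ • ∮ ζ in C(a, r), (1 / (ζ - a) ^ (j + 1)) • f (ζ, y) := by
    intro y hy
    have hd : DifferentiableOn ℂ (fun x => f (x, y)) (closedBall a r) :=
      hf.comp (by fun_prop) fun x hx => hsub ⟨hx, hy⟩
    rw [hd.circleIntegral_one_div_sub_center_pow_smul hr, inv_smul_smul₀]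
    simp [Real.pi_ne_zero, Nat.factorial_ne_zero]
  have hint : DifferentiableAt ℂ
      (fun y => ∮ ζ in C(a, r), (1 / (ζ - a) ^ (j + 1)) • f (ζ, y)) b := by
    refine differentiableAt_circleIntegral_of_differentiableOn_snd
      (f := fun p => (1 / (p.1 - a) ^ (j + 1)) • f p) hr.le hr ?_ fun ζ hζ => ?_
    · refine ContinuousOn.smul ?_ (hf.continuousOn.mono
        ((Set.prod_mono sphere_subset_closedBall le_rfl).trans hsub))
      refine continuousOn_const.div (by fun_prop) fun p hp => pow_ne_zero _ (sub_ne_zero.mpr ?_)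
      exact ne_of_mem_sphere hp.1 hr.ne'
    · exact (hf.comp (f := fun y => (ζ, y)) (by fun_prop)
        fun y hy => hsub ⟨sphere_subset_closedBall hζ, hy⟩).const_smul (1 / (ζ - a) ^ (j + 1))
  exact (hint.const_smul _).congr_of_eventuallyEq
    (Filter.eventually_of_mem (closedBall_mem_nhds b hr) hcauchy)

end CircleIntegralParam

theorem stmt4_general (U : Set (ℂ × ℂ)) (hU : IsOpen U)
    (f : ℂ × ℂ → ℂ) (hf : DifferentiableOn ℂ f U) (m n : ℕ)
    (hm : 1 ≤ m) (hn : 1 ≤ n)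
    (z w : ℂ) (hzw : (z, w) ∈ U) :
    PM n m f z w =
      ∑ j ∈ Finset.Icc 1 n, ∑ k ∈ Finset.Icc 1 m,
        (iteratedDeriv k (fun b => iteratedDeriv j (fun a => f (a, b)) z) w)
          * (1 - z * w) ^ (j + k)
          * ((n.factorial : ℂ) * (m.factorial : ℂ) / ((j.factorial : ℂ) * (k.factorial : ℂ)))
          * ((n - 1).choose (j - 1) : ℂ) * ((m - 1).choose (k - 1) : ℂ)
          * (-w) ^ (n - j) * (-z) ^ (m - k) := by
  set G : ℕ → ℂ → ℂ := fun j b => iteratedDeriv j (fun a => f (a, b)) z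
  set c : ℕ → ℂ := fun j => (1 - z * w) ^ j *
    ((n.factorial : ℂ) / j.factorial * (n - 1).choose (j - 1)) * (-w) ^ (n - j)
  have hslice : IsOpen {b | (z, b) ∈ U} := hU.preimage (by fun_prop)
  have hG : ∀ j, DifferentiableOn ℂ (G j) {b | (z, b) ∈ U} := fun j b hb =>
    (differentiableAt_iteratedDeriv_fst hU hf hb j).differentiableWithinAt
  have hnear : ∀ᶠ v in nhds 0, (w + v) / (1 + z * v) ∈ {b | (z, b) ∈ U} :=
    (hasDerivAt_mobius (by simp)).continuousAt (hslice.mem_nhds (by simpa using hzw))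
  have hinner : (fun v => iteratedDeriv n
        (fun u => f ((z + u) / (1 + w * u), (w + v) / (1 + z * v))) 0)
      =ᶠ[nhds 0] fun v => ∑ j ∈ Icc 1 n, c j * G j ((w + v) / (1 + z * v)) := by
    filter_upwards [hnear] with v hv
    rw [iteratedDeriv_comp_mobius_zero (g := fun a => f (a, (w + v) / (1 + z * v)))
      (hU.preimage (by fun_prop)) (hf.comp (by fun_prop) fun a ha => ha) hv hn]
    exact sum_congr rfl fun j _ => by ring
  have hsmooth : ∀ j, ContDiffAt ℂ m (fun v => c j * G j ((w + v) / (1 + z * v))) 0 := by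
    intro j
    have hGj : ContDiffAt ℂ m (G j) ((w + 0) / (1 + z * 0)) := by
      simpa using ((hG j).contDiffOn hslice).contDiffAt (hslice.mem_nhds hzw)
    have hT : ContDiffAt ℂ m (fun v => (w + v) / (1 + z * v)) 0 := by fun_prop (disch := simp)
    exact contDiffAt_const.mul (hGj.comp (g := G j) (0 : ℂ) hT)
  rw [PM, hinner.iteratedDeriv_eq, iteratedDeriv_fun_sum fun j _ => hsmooth j]
  refine sum_congr rfl fun j _ => ?_
  rw [iteratedDeriv_const_mul_field, iteratedDeriv_comp_mobius_zero hslice (hG j) hzw hm, mul_sum]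
  exact sum_congr rfl fun k _ => by ring

/-- explicit formula for `D^{n,m} f` in terms of euclidean (Wirtinger)
derivatives `∂₁^j ∂₂^k f`. -/
theorem stmt4 (U : Set (ℂ × ℂ)) (hU : IsOpen U) (hUO : U ⊆ Oset)
    (f : ℂ × ℂ → ℂ) (hf : DifferentiableOn ℂ f U) (m n : ℕ)
    (hm : 1 ≤ m) (hn : 1 ≤ n)
    (z w : ℂ) (hzw : (z, w) ∈ U) (hz : z ≠ 0) (hw : w ≠ 0) :
    PM n m f z w =
      ∑ j ∈ Finset.Icc 1 n, ∑ k ∈ Finset.Icc 1 m,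
        (iteratedDeriv k (fun b => iteratedDeriv j (fun a => f (a, b)) z) w)
          * (1 - z * w) ^ (j + k)
          * ((n.factorial : ℂ) * (m.factorial : ℂ) / ((j.factorial : ℂ) * (k.factorial : ℂ)))
          * ((n - 1).choose (j - 1) : ℂ) * ((m - 1).choose (k - 1) : ℂ)
          * (-w) ^ (n - j) * (-z) ^ (m - k) :=
  stmt4_general U hU f hf m n hm hn z w hzw
end

section
/- Let U ⊆ O be open, let f : ℂ × ℂ → ℂ be holomorphic on U, let m, n ∈ ℕ, let α, β ∈ ℂ with α·β ≠ 1, and let γ ∈ ℂ ∖ {0}. Define T(z,w) := (γ·(α+z)/(1+β·z), (β+w)/(γ·(1+α·w))). Let (z,w) ∈ ℂ × ℂ with z·w ≠ 1, 1 + β·z ≠ 0, 1 + α·w ≠ 0 and T(z,w) ∈ U. Then D^{m,n}(f ∘ T)(z,w) = (γ·(1+α·w)/(1+β·z))^{m−n} · (D^{m,n} f)(T(z,w)), where the exponent m − n is taken in ℤ. -/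
open Filter Topology

section Rescaling

variable {𝕜 E : Type*} [NontriviallyNormedField 𝕜] [NormedAddCommGroup E] [NormedSpace 𝕜 E]

theorem iteratedDeriv_comp_mul_left (n : ℕ) (c : 𝕜) (f : 𝕜 → E) (x : 𝕜) :
    iteratedDeriv n (fun y => f (c * y)) x = c ^ n • iteratedDeriv n f (c * x) := by
  induction n generalizing f with
  | zero => simp
  | succ n ih =>
    have hderiv : deriv (fun y => f (c * y)) = fun y => c • deriv f (c * y) :=
      funext (deriv_comp_mul_left c f)
    rw [iteratedDeriv_succ', iteratedDeriv_succ', hderiv, iteratedDeriv_fun_const_smul_field,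
      ih, smul_smul, pow_succ']

theorem iteratedDeriv_iteratedDeriv_comp_mul_inv (m n : ℕ) (g : 𝕜 → 𝕜 → E) {c : 𝕜}
    (hc : c ≠ 0) (x y : 𝕜) :
    iteratedDeriv n (fun v => iteratedDeriv m (fun u => g (c * u) (c⁻¹ * v)) x) y
      = c ^ ((m : ℤ) - n) •
          iteratedDeriv n (fun v => iteratedDeriv m (fun u => g u v) (c * x)) (c⁻¹ * y) := by
  have inner : ∀ v, iteratedDeriv m (fun u => g (c * u) (c⁻¹ * v)) x
      = c ^ m • iteratedDeriv m (fun u => g u (c⁻¹ * v)) (c * x) := fun v =>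
    iteratedDeriv_comp_mul_left m c (fun u => g u (c⁻¹ * v)) x
  simp only [inner, iteratedDeriv_fun_const_smul_field,
    iteratedDeriv_comp_mul_left n c⁻¹ (fun v => iteratedDeriv m (fun u => g u v) (c * x)),
    smul_smul, zpow_sub₀ hc, zpow_natCast, inv_pow, div_eq_mul_inv]

theorem iteratedDeriv_iteratedDeriv_congr {m n : ℕ} {g h : 𝕜 → 𝕜 → E} {x y : 𝕜}
    (hgh : ∀ᶠ v in 𝓝 y, ∀ᶠ u in 𝓝 x, g u v = h u v) :
    iteratedDeriv n (fun v => iteratedDeriv m (fun u => g u v) x) y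
      = iteratedDeriv n (fun v => iteratedDeriv m (fun u => h u v) x) y :=
  EventuallyEq.iteratedDeriv_eq n (hgh.mono fun _ hv => EventuallyEq.iteratedDeriv_eq m hv)

theorem eventually_add_mul_ne_zero {a : 𝕜} (ha : a ≠ 0) (b : 𝕜) :
    ∀ᶠ u in 𝓝 0, a + b * u ≠ 0 :=
  (continuous_const.add (continuous_const.mul continuous_id)).continuousAt.eventually_ne
    (by simpa using ha)

end Rescaling

noncomputable def pmChart (a b u : ℂ) : ℂ := (a + u) / (1 + b * u)

noncomputable def moebius (γ α β ζ : ℂ) : ℂ := γ * (α + ζ) / (1 + β * ζ)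

theorem PM_eq_pmChart (m n : ℕ) (f : ℂ × ℂ → ℂ) (z w : ℂ) :
    PM m n f z w
      = iteratedDeriv n (fun v => iteratedDeriv m (fun u => f (pmChart z w u, pmChart w z v)) 0) 0 :=
  rfl

theorem moebius_pmChart {γ α β z w u : ℂ} (hγ : γ ≠ 0) (hz : 1 + β * z ≠ 0)
    (hw : 1 + α * w ≠ 0) (hu : 1 + w * u ≠ 0) (hu' : 1 + β * z + (β + w) * u ≠ 0) :
    moebius γ α β (pmChart z w u)
      = pmChart (moebius γ α β z) (moebius γ⁻¹ β α w) (γ * (1 + α * w) / (1 + β * z) * u) := by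
  have hden : 1 + β * pmChart z w u = (1 + β * z + (β + w) * u) / (1 + w * u) := by
    rw [pmChart, mul_div_assoc', one_add_div hu]
    ring
  have hden' : 1 + moebius γ⁻¹ β α w * (γ * (1 + α * w) / (1 + β * z) * u)
      = (1 + β * z + (β + w) * u) / (1 + β * z) := by
    rw [moebius]
    generalize 1 + α * w = D at hw ⊢
    field_simp
  rw [moebius, hden]
  unfold pmChart
  rw [hden', moebius]
  -- as atoms, the denominators are not reordered by `field_simp` away from `hu` and `hz`
  generalize hc : 1 + w * u = c at hu ⊢
  generalize 1 + β * z = E at hz ⊢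
  field_simp
  subst hc
  ring

theorem stmt5_general
    (f : ℂ × ℂ → ℂ) (m n : ℕ)
    (α β : ℂ) (γ : ℂ) (hγ : γ ≠ 0)
    (T : ℂ × ℂ → ℂ × ℂ)
    (hT : T = fun p => (γ * (α + p.1) / (1 + β * p.1), (β + p.2) / (γ * (1 + α * p.2))))
    (z w : ℂ)
    (h1 : 1 + β * z ≠ 0) (h2 : 1 + α * w ≠ 0) :
    PM m n (f ∘ T) z w
      = (γ * (1 + α * w) / (1 + β * z)) ^ ((m : ℤ) - (n : ℤ))
          * PM m n f (T (z, w)).1 (T (z, w)).2 := by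
  -- both coordinates of `T` are `moebius` maps, so `moebius_pmChart` serves for `u` and for `v`
  obtain rfl : T = fun p => (moebius γ α β p.1, moebius γ⁻¹ β α p.2) :=
    hT.trans (funext fun p => Prod.ext rfl (by simp only [moebius]; field_simp))
  set k := γ * (1 + α * w) / (1 + β * z)
  have hk : k ≠ 0 := div_ne_zero (mul_ne_zero hγ h2) h1
  have hk_inv : γ⁻¹ * (1 + β * z) / (1 + α * w) = k⁻¹ := by simp only [k, inv_div]; field_simp
  have hchart : ∀ᶠ v in 𝓝 0, ∀ᶠ u in 𝓝 0,
      f (moebius γ α β (pmChart z w u), moebius γ⁻¹ β α (pmChart w z v))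
        = f (pmChart (moebius γ α β z) (moebius γ⁻¹ β α w) (k * u),
            pmChart (moebius γ⁻¹ β α w) (moebius γ α β z) (k⁻¹ * v)) := by
    filter_upwards [eventually_add_mul_ne_zero one_ne_zero z,
      eventually_add_mul_ne_zero h2 (α + z)] with v hv hv'
    filter_upwards [eventually_add_mul_ne_zero one_ne_zero w,
      eventually_add_mul_ne_zero h1 (β + w)] with u hu hu'
    rw [moebius_pmChart hγ h1 h2 hu hu', moebius_pmChart (inv_ne_zero hγ) h2 h1 hv hv', inv_inv,
      hk_inv]
  rw [PM_eq_pmChart, PM_eq_pmChart]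
  simp only [Function.comp_apply]
  rw [iteratedDeriv_iteratedDeriv_congr hchart, iteratedDeriv_iteratedDeriv_comp_mul_inv m n
    (fun u v => f (pmChart _ _ u, pmChart _ _ v)) hk, mul_zero, mul_zero, smul_eq_mul]

/-- Möbius invariance of the Peschl–Minda derivatives,
`D^{m,n}(f ∘ T)(z,w) = (γ(1+αw)/(1+βz))^{m−n} · (D^{m,n} f)(T(z,w))`
for the Möbius-type map `T = ρ_γ ∘ Φ_{α,β}`. -/
theorem stmt5 (U : Set (ℂ × ℂ)) (hU : IsOpen U) (hUO : U ⊆ Oset)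
    (f : ℂ × ℂ → ℂ) (hf : DifferentiableOn ℂ f U) (m n : ℕ)
    (α β : ℂ) (hαβ : α * β ≠ 1) (γ : ℂ) (hγ : γ ≠ 0)
    (T : ℂ × ℂ → ℂ × ℂ)
    (hT : T = fun p => (γ * (α + p.1) / (1 + β * p.1), (β + p.2) / (γ * (1 + α * p.2))))
    (z w : ℂ) (hzw : z * w ≠ 1)
    (h1 : 1 + β * z ≠ 0) (h2 : 1 + α * w ≠ 0) (hTU : T (z, w) ∈ U) :
    PM m n (f ∘ T) z w
      = (γ * (1 + α * w) / (1 + β * z)) ^ ((m : ℤ) - (n : ℤ))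
          * PM m n f (T (z, w)).1 (T (z, w)).2 :=
  stmt5_general f m n α β γ hγ T hT z w h1 h2
end

section
/- Let k ∈ ℤ and let f : ℂ × ℂ → ℂ be holomorphic on O and k-homogeneous, i.e. f(γ·z, w/γ) = γ^k · f(z,w) for all γ ∈ ℂ ∖ {0} and all (z,w) ∈ O (note (γ·z, w/γ) ∈ O). Then for all m, n ∈ ℕ, γ ∈ ℂ ∖ {0} and (z,w) ∈ O one has D^{m,n} f(γ·z, w/γ) = γ^{k+n−m} · D^{m,n} f(z,w); that is, D^{m,n} f is homogeneous of degree k − (m − n) (here γ^{k+n−m} is an integer power). -/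
private lemma evIter {f g : ℂ → ℂ} {x : ℂ} (h : f =ᶠ[nhds x] g) (n : ℕ) :
    iteratedDeriv n f x = iteratedDeriv n g x := by
  induction n generalizing f g with
  | zero => simpa using h.eq_of_nhds
  | succ n ih => rw [iteratedDeriv_succ', iteratedDeriv_succ']; exact ih h.deriv

private lemma derivScale (F : ℂ → ℂ) (a c : ℂ) (hc : c ≠ 0) (x : ℂ) :
    deriv (fun y => a * F (c * y)) x = a * c * deriv F (c * x) := by
  by_cases hF : DifferentiableAt ℂ F (c * x)
  · have h1 : HasDerivAt (fun y : ℂ => c * y) c x := by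
      simpa using (hasDerivAt_id x).const_mul c
    have h2 := (hF.hasDerivAt.comp x h1).const_mul a
    have h3 : deriv (fun y => a * F (c * y)) x = a * (deriv F (c * x) * c) := h2.deriv
    rw [h3]; ring
  · by_cases ha : a = 0
    · simp [ha]
    · have hG : ¬ DifferentiableAt ℂ (fun y => a * F (c * y)) x := by
        intro hG
        apply hF
        have hx : c⁻¹ * (c * x) = x := by field_simp
        have hG' : DifferentiableAt ℂ (fun y => a * F (c * y)) (c⁻¹ * (c * x)) := by
          rw [hx]; exact hG
        have hlin : DifferentiableAt ℂ (fun t : ℂ => c⁻¹ * t) (c * x) :=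
          differentiableAt_id.const_mul c⁻¹
        have h5 := hG'.comp (c * x) hlin
        have h6 := h5.const_mul a⁻¹
        have h7 : (fun t => a⁻¹ * ((fun y => a * F (c * y)) ∘ fun t : ℂ => c⁻¹ * t) t) = F := by
          funext t
          simp only [Function.comp_apply]
          rw [show c * (c⁻¹ * t) = t by field_simp, ← mul_assoc, inv_mul_cancel₀ ha, one_mul]
        rwa [h7] at h6
      rw [deriv_zero_of_not_differentiableAt hG, deriv_zero_of_not_differentiableAt hF]
      ring

private lemma iterScale (F : ℂ → ℂ) (a c : ℂ) (hc : c ≠ 0) (n : ℕ) (x : ℂ) :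
    iteratedDeriv n (fun y => a * F (c * y)) x = a * c ^ n * iteratedDeriv n F (c * x) := by
  induction n generalizing x with
  | zero => simp
  | succ n ih =>
    rw [iteratedDeriv_succ]
    have h : iteratedDeriv n (fun y => a * F (c * y))
        = fun y => (a * c ^ n) * iteratedDeriv n F (c * y) := funext fun y => ih y
    rw [h, derivScale (iteratedDeriv n F) (a * c ^ n) c hc x, iteratedDeriv_succ]
    ring

/-- if `f` is `k`-homogeneous, then `D^{m,n} f` is homogeneous of degree
`k − (m − n)`. -/
theorem stmt6 (k : ℤ) (f : ℂ × ℂ → ℂ) (hf : DifferentiableOn ℂ f Oset)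
    (hhom : ∀ γ : ℂ, γ ≠ 0 → ∀ z w : ℂ, z * w ≠ 1 →
      f (γ * z, w / γ) = γ ^ k * f (z, w)) :
    ∀ m n : ℕ, ∀ γ : ℂ, γ ≠ 0 → ∀ z w : ℂ, z * w ≠ 1 →
      PM m n f (γ * z) (w / γ) = γ ^ (k + (n : ℤ) - (m : ℤ)) * PM m n f z w := by
  intro m n γ hγ z w hzw
  set F : ℂ → ℂ := fun v => iteratedDeriv m
    (fun u => f ((z + u) / (1 + w * u), (w + v) / (1 + z * v))) 0 with hF
  -- the open set where the homogeneity identity applies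
  set s : Set (ℂ × ℂ) := {p | (1 + w * p.1 ≠ 0 ∧ 1 + z * p.2 ≠ 0) ∧
      (z + p.1) * (w + p.2) ≠ (1 + w * p.1) * (1 + z * p.2)} with hsdef
  have hs : IsOpen s := by
    apply IsOpen.inter
    · apply IsOpen.inter
      · exact isOpen_ne_fun (by fun_prop) continuous_const
      · exact isOpen_ne_fun (by fun_prop) continuous_const
    · exact isOpen_ne_fun (by fun_prop) (by fun_prop)
  set s₂ : Set (ℂ × ℂ) := (fun p : ℂ × ℂ => (γ⁻¹ * p.1, γ * p.2)) ⁻¹' s with hs2def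
  have hso : IsOpen s₂ := hs.preimage (by fun_prop)
  have h0 : ((0 : ℂ), (0 : ℂ)) ∈ s₂ := by
    simp only [hs2def, hsdef, Set.mem_preimage, Set.mem_setOf_eq, mul_zero, add_zero, mul_one]
    exact ⟨⟨one_ne_zero, one_ne_zero⟩, by simpa using hzw⟩
  obtain ⟨t₁, ht₁, t₂, ht₂, hsub⟩ := mem_nhds_prod_iff.mp (hso.mem_nhds h0)
  -- the key pointwise identity
  have claim1 : ∀ p : ℂ × ℂ, p ∈ s₂ →
      f ((γ * z + p.1) / (1 + w / γ * p.1), (w / γ + p.2) / (1 + γ * z * p.2))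
        = γ ^ k * f ((z + γ⁻¹ * p.1) / (1 + w * (γ⁻¹ * p.1)),
            (w + γ * p.2) / (1 + z * (γ * p.2))) := by
    rintro p hp
    obtain ⟨⟨hA, hB⟩, hne⟩ := hp
    set Z := (z + γ⁻¹ * p.1) / (1 + w * (γ⁻¹ * p.1)) with hZ
    set W := (w + γ * p.2) / (1 + z * (γ * p.2)) with hW
    have hZW : Z * W ≠ 1 := by
      rw [hZ, hW, div_mul_div_comm]
      intro h
      exact hne ((div_eq_one_iff_eq (mul_ne_zero hA hB)).mp h)
    have e1 : (γ * z + p.1) / (1 + w / γ * p.1) = γ * Z := by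
      rw [hZ]
      rw [show (1 : ℂ) + w / γ * p.1 = 1 + w * (γ⁻¹ * p.1) by ring]
      rw [show γ * z + p.1 = γ * (z + γ⁻¹ * p.1) by field_simp]
      rw [mul_div_assoc]
    have e2 : (w / γ + p.2) / (1 + γ * z * p.2) = W / γ := by
      rw [hW]
      rw [show (1 : ℂ) + γ * z * p.2 = 1 + z * (γ * p.2) by ring]
      rw [show w / γ + p.2 = (w + γ * p.2) / γ by field_simp]
      exact div_right_comm _ _ _
    rw [e1, e2, hhom γ hγ Z W hZW]
  -- inner scaling, for v near 0
  have step1 : ∀ v ∈ t₂, iteratedDeriv m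
      (fun u => f ((γ * z + u) / (1 + w / γ * u), (w / γ + v) / (1 + γ * z * v))) 0
        = (γ ^ k * γ⁻¹ ^ m) * F (γ * v) := by
    intro v hv
    have hev : (fun u => f ((γ * z + u) / (1 + w / γ * u), (w / γ + v) / (1 + γ * z * v)))
        =ᶠ[nhds 0] (fun u => γ ^ k * f ((z + γ⁻¹ * u) / (1 + w * (γ⁻¹ * u)),
            (w + γ * v) / (1 + z * (γ * v)))) := by
      filter_upwards [ht₁] with u hu
      exact claim1 (u, v) (hsub ⟨hu, hv⟩)
    rw [evIter hev m]
    have h2 := iterScale (fun u => f ((z + u) / (1 + w * u), (w + γ * v) / (1 + z * (γ * v))))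
      (γ ^ k) γ⁻¹ (inv_ne_zero hγ) m 0
    simp only [mul_zero] at h2
    rw [h2, hF]
  -- outer scaling
  have hev2 : (fun v => iteratedDeriv m
      (fun u => f ((γ * z + u) / (1 + w / γ * u), (w / γ + v) / (1 + γ * z * v))) 0)
      =ᶠ[nhds 0] (fun v => (γ ^ k * γ⁻¹ ^ m) * F (γ * v)) := by
    filter_upwards [ht₂] with v hv
    exact step1 v hv
  have main : PM m n f (γ * z) (w / γ)
      = (γ ^ k * γ⁻¹ ^ m) * γ ^ n * iteratedDeriv n F 0 := by
    have := evIter hev2 n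
    rw [PM] at *
    rw [this]
    have h3 := iterScale F (γ ^ k * γ⁻¹ ^ m) γ hγ n 0
    simp only [mul_zero] at h3
    exact h3
  rw [main]
  have hcoef : γ ^ (k + (n : ℤ) - (m : ℤ)) = γ ^ k * γ⁻¹ ^ m * γ ^ n := by
    rw [zpow_sub₀ hγ, zpow_add₀ hγ, zpow_natCast, zpow_natCast, inv_pow]
    ring
  rw [hcoef, PM]
end

section
/- For every n ∈ ℕ, all coefficients of the polynomial P_n ∈ ℤ[x] are nonnegative (so every non-vanishing coefficient of P_n is a positive integer). -/
/-- The polynomials `P_n`: `P_0 = 1`, `P_1 = x`,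
`P_{n+1}(x) = (x + 2n²)·P_n(x) − n²(n−1)²·P_{n−1}(x)` for `n ≥ 1`. -/
noncomputable def Pn : ℕ → Polynomial ℤ
  | 0 => 1
  | 1 => Polynomial.X
  | (n + 2) =>
      (Polynomial.X + Polynomial.C (2 * ((n : ℤ) + 1) ^ 2)) * Pn (n + 1)
        - Polynomial.C (((n : ℤ) + 1) ^ 2 * (n : ℤ) ^ 2) * Pn n

lemma pn_aux (n : ℕ) :
    (∀ k, 0 ≤ (Pn n).coeff k) ∧
      (∀ k, 0 ≤ (Pn (n + 1) - Polynomial.C ((n : ℤ) ^ 2) * Pn n).coeff k) := by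
  induction n with
  | zero =>
    constructor
    · intro k
      rcases k with _ | k <;> simp [Pn, Polynomial.coeff_one]
    · intro k
      rcases k with _ | k <;>
        simp [Pn, Polynomial.coeff_X]
      split <;> simp
  | succ n ih =>
    obtain ⟨h1, h2⟩ := ih
    have hP : ∀ k, 0 ≤ (Pn (n + 1)).coeff k := by
      intro k
      have := Pn (n + 1) - Polynomial.C ((n : ℤ) ^ 2) * Pn n
      have key : Pn (n + 1) =
          (Pn (n + 1) - Polynomial.C ((n : ℤ) ^ 2) * Pn n) +
            Polynomial.C ((n : ℤ) ^ 2) * Pn n := by ring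
      rw [key, Polynomial.coeff_add, Polynomial.coeff_C_mul]
      have := h2 k
      have := h1 k
      positivity
    refine ⟨hP, ?_⟩
    have key : Pn (n + 1 + 1) - Polynomial.C (((n : ℕ) + 1 : ℤ) ^ 2) * Pn (n + 1) =
        Polynomial.X * Pn (n + 1) +
          Polynomial.C (((n : ℤ) + 1) ^ 2) *
            (Pn (n + 1) - Polynomial.C ((n : ℤ) ^ 2) * Pn n) := by
      show Pn (n + 2) - _ = _
      rw [Pn]
      simp only [map_mul, map_add, map_pow, map_one, map_ofNat, Polynomial.C_1]
      ring
    intro k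
    have hcast : ((n + 1 : ℕ) : ℤ) = (n : ℤ) + 1 := by push_cast; ring
    rw [hcast, key, Polynomial.coeff_add, Polynomial.coeff_C_mul]
    have hx : 0 ≤ (Polynomial.X * Pn (n + 1)).coeff k := by
      rcases k with _ | k
      · simp
      · rw [Polynomial.coeff_X_mul]
        exact hP k
    have := h2 k
    positivity

/-- all coefficients of `P_n` are nonnegative. -/
theorem stmt9 (n : ℕ) (k : ℕ) : 0 ≤ (Pn n).coeff k := by
  exact (pn_aux n).1 k
end

section
/- For all m, n ∈ ℕ with m ≥ n, all coefficients of the polynomial P_{m,n} ∈ ℤ[x] are nonnegative (so every non-vanishing coefficient of P_{m,n} is a positive integer). -/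
/-- `α_{n,k} = n!·(n−1)!/(k!·(k−1)!)` (with `α_{0,0} = 1`, `α_{n,0} = n!(n−1)!`). -/
def alphaPM (n k : ℕ) : ℕ :=
  (n.factorial * (n - 1).factorial) / (k.factorial * (k - 1).factorial)

/-- `PmnAux p n = P_{n+p,n}`: `P_{n,n} = P_n` and
`P_{n+p+1,n}(x) = Σ_{k=0}^n α_{n,k}·P_{k+p,k}(x)`. -/
noncomputable def PmnAux : ℕ → ℕ → Polynomial ℤ
  | 0, n => Pn n
  | (p + 1), n => ∑ k ∈ Finset.range (n + 1), Polynomial.C (alphaPM n k : ℤ) * PmnAux p k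

/-- The polynomials `P_{m,n}` for `m ≥ n`. -/
noncomputable def Pmn (m n : ℕ) : Polynomial ℤ := PmnAux (m - n) n

open Polynomial in
lemma pn_rec (n : ℕ) : Pn (n + 2) =
    X * Pn (n + 1) + C (((n : ℤ) + 1) ^ 2) * Pn (n + 1)
      + (C (((n : ℤ) + 1) ^ 2) * Pn (n + 1) - C (((n : ℤ) + 1) ^ 2 * (n : ℤ) ^ 2) * Pn n) := by
  show (X + C (2 * ((n : ℤ) + 1) ^ 2)) * Pn (n + 1)
        - C (((n : ℤ) + 1) ^ 2 * (n : ℤ) ^ 2) * Pn n = _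
  simp only [map_mul, map_add, map_one, map_pow, map_ofNat]
  ring

lemma pn_key (n : ℕ) : (∀ k, 0 ≤ (Pn n).coeff k) ∧
    ∀ k, (n : ℤ) ^ 2 * (Pn n).coeff k ≤ (Pn (n + 1)).coeff k := by
  induction n with
  | zero =>
    refine ⟨fun k => ?_, fun k => ?_⟩
    · show (0:ℤ) ≤ (1 : Polynomial ℤ).coeff k
      rw [Polynomial.coeff_one]; split <;> simp
    · show ((0:ℕ) : ℤ) ^ 2 * (1 : Polynomial ℤ).coeff k ≤ Polynomial.X.coeff k
      rw [Polynomial.coeff_X]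
      split <;> simp
  | succ n ih =>
    obtain ⟨h1, h2⟩ := ih
    have h1' : ∀ k, 0 ≤ (Pn (n + 1)).coeff k := fun k =>
      le_trans (mul_nonneg (by positivity) (h1 k)) (h2 k)
    refine ⟨h1', fun k => ?_⟩
    have hd : (Pn (n + 2)).coeff k =
        (Polynomial.X * Pn (n + 1)).coeff k + ((n : ℤ) + 1) ^ 2 * (Pn (n + 1)).coeff k
          + (((n : ℤ) + 1) ^ 2 * (Pn (n + 1)).coeff k
              - ((n : ℤ) + 1) ^ 2 * (n : ℤ) ^ 2 * (Pn n).coeff k) := by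
      rw [pn_rec]
      simp only [Polynomial.coeff_add, Polynomial.coeff_sub, Polynomial.coeff_C_mul, mul_assoc]
    have hx : 0 ≤ (Polynomial.X * Pn (n + 1)).coeff k := by
      cases k with
      | zero => simp [Polynomial.mul_coeff_zero]
      | succ k => rw [Polynomial.coeff_X_mul]; exact h1' k
    have hs : 0 ≤ ((n : ℤ) + 1) ^ 2 * (Pn (n + 1)).coeff k
        - ((n : ℤ) + 1) ^ 2 * (n : ℤ) ^ 2 * (Pn n).coeff k := by
      have := h2 k
      nlinarith [sq_nonneg ((n : ℤ) + 1)]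
    push_cast
    rw [hd]
    nlinarith [hx, h1' k]

lemma pmnaux_nonneg (p : ℕ) : ∀ n k, 0 ≤ (PmnAux p n).coeff k := by
  induction p with
  | zero => intro n k; exact (pn_key n).1 k
  | succ p ih =>
    intro n k
    rw [PmnAux]
    rw [Polynomial.finset_sum_coeff]
    refine Finset.sum_nonneg fun i _ => ?_
    rw [Polynomial.coeff_C_mul]
    exact mul_nonneg (by positivity) (ih i k)

/-- all coefficients of `P_{m,n}` are nonnegative for `m ≥ n`. -/
theorem stmt10 (m n : ℕ) (hmn : n ≤ m) (k : ℕ) : 0 ≤ (Pmn m n).coeff k := by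
  exact pmnaux_nonneg (m - n) n k
end

section
/- Let U ⊆ O be open, let f : ℂ × ℂ → ℂ be holomorphic on U, and let m, n ∈ ℕ. Then the pure Peschl–Minda differential operators of the same type commute: for every (z,w) ∈ U, D^{n,0}(D^{m,0} f)(z,w) = D^{m,0}(D^{n,0} f)(z,w), where D^{m,0} f denotes the function (z,w) ↦ D^{m,0} f(z,w) on U (which is holomorphic on U, so the outer operator is defined). Likewise D^{0,n}(D^{0,m} f) = D^{0,m}(D^{0,n} f) on U. -/
open Filter Topology

/-! Auxiliary partial-derivative operators on `ℂ × ℂ`. -/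

noncomputable def pd1 (F : ℂ × ℂ → ℂ) (p : ℂ × ℂ) : ℂ := deriv (fun u => F (u, p.2)) p.1
noncomputable def pd2 (F : ℂ × ℂ → ℂ) (p : ℂ × ℂ) : ℂ := deriv (fun v => F (p.1, v)) p.2

lemma iterDeriv_pd1 (m : ℕ) (F : ℂ × ℂ → ℂ) (a b : ℂ) :
    iteratedDeriv m (fun u => F (u, b)) a = (pd1^[m] F) (a, b) := by
  induction m generalizing F with
  | zero => simp
  | succ m ih =>
    rw [iteratedDeriv_succ']
    have h : deriv (fun u => F (u, b)) = fun u => pd1 F (u, b) := rfl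
    rw [h, ih (pd1 F), Function.iterate_succ_apply]

lemma iterDeriv_pd2 (m : ℕ) (F : ℂ × ℂ → ℂ) (a b : ℂ) :
    iteratedDeriv m (fun v => F (a, v)) b = (pd2^[m] F) (a, b) := by
  induction m generalizing F with
  | zero => simp
  | succ m ih =>
    rw [iteratedDeriv_succ']
    have h : deriv (fun v => F (a, v)) = fun v => pd2 F (a, v) := rfl
    rw [h, ih (pd2 F), Function.iterate_succ_apply]

lemma pd1_swap (G : ℂ × ℂ → ℂ) :
    pd1 (fun p => G (p.2, p.1)) = fun p => pd2 G (p.2, p.1) := rfl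

lemma pd2_swap (G : ℂ × ℂ → ℂ) :
    pd2 (fun p => G (p.2, p.1)) = fun p => pd1 G (p.2, p.1) := rfl

lemma pd1_iter_swap (G : ℂ × ℂ → ℂ) (m : ℕ) :
    pd1^[m] (fun p => G (p.2, p.1)) = fun p => pd2^[m] G (p.2, p.1) := by
  induction m generalizing G with
  | zero => rfl
  | succ m ih =>
    rw [Function.iterate_succ_apply, pd1_swap, ih (pd2 G), ← Function.iterate_succ_apply]

lemma pd2_iter_swap (G : ℂ × ℂ → ℂ) (m : ℕ) :
    pd2^[m] (fun p => G (p.2, p.1)) = fun p => pd1^[m] G (p.2, p.1) := by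
  induction m generalizing G with
  | zero => rfl
  | succ m ih =>
    rw [Function.iterate_succ_apply, pd2_swap, ih (pd1 G), ← Function.iterate_succ_apply]

lemma hline1 {V : Set (ℂ × ℂ)} (hV : IsOpen V) {p : ℂ × ℂ} (hp : p ∈ V) :
    ∀ᶠ u in 𝓝 p.1, (u, p.2) ∈ V := by
  have hc : ContinuousAt (fun u : ℂ => (u, p.2)) p.1 := by fun_prop
  exact hc.preimage_mem_nhds (hV.mem_nhds (by simpa using hp))

lemma hline2 {V : Set (ℂ × ℂ)} (hV : IsOpen V) {p : ℂ × ℂ} (hp : p ∈ V) :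
    ∀ᶠ v in 𝓝 p.2, (p.1, v) ∈ V := by
  have hc : ContinuousAt (fun v : ℂ => (p.1, v)) p.2 := by fun_prop
  exact hc.preimage_mem_nhds (hV.mem_nhds (by simpa using hp))

lemma pd1_congr {G G' : ℂ × ℂ → ℂ} {V : Set (ℂ × ℂ)} (hV : IsOpen V)
    (h : Set.EqOn G G' V) : Set.EqOn (pd1 G) (pd1 G') V := by
  intro p hp
  apply Filter.EventuallyEq.deriv_eq
  filter_upwards [hline1 hV hp] with u hu using h hu

lemma pd2_congr {G G' : ℂ × ℂ → ℂ} {V : Set (ℂ × ℂ)} (hV : IsOpen V)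
    (h : Set.EqOn G G' V) : Set.EqOn (pd2 G) (pd2 G') V := by
  intro p hp
  apply Filter.EventuallyEq.deriv_eq
  filter_upwards [hline2 hV hp] with v hv using h hv

lemma pd1_iter_congr {G G' : ℂ × ℂ → ℂ} {V : Set (ℂ × ℂ)} (hV : IsOpen V)
    (h : Set.EqOn G G' V) (a : ℕ) : Set.EqOn (pd1^[a] G) (pd1^[a] G') V := by
  induction a with
  | zero => exact h
  | succ a ih =>
    rw [Function.iterate_succ_apply', Function.iterate_succ_apply']
    exact pd1_congr hV ih

lemma pd1_eq_fderiv {F : ℂ × ℂ → ℂ} {p : ℂ × ℂ} (h : DifferentiableAt ℂ F p) :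
    pd1 F p = fderiv ℂ F p (1, 0) := by
  have h1 : HasDerivAt (fun u : ℂ => (u, p.2)) ((1:ℂ), (0:ℂ)) p.1 :=
    (hasDerivAt_id p.1).prodMk (hasDerivAt_const p.1 p.2)
  have h2 : HasFDerivAt F (fderiv ℂ F p) (p.1, p.2) := by
    rw [Prod.mk.eta]; exact h.hasFDerivAt
  exact (h2.comp_hasDerivAt p.1 h1).deriv

lemma pd2_eq_fderiv {F : ℂ × ℂ → ℂ} {p : ℂ × ℂ} (h : DifferentiableAt ℂ F p) :
    pd2 F p = fderiv ℂ F p (0, 1) := by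
  have h1 : HasDerivAt (fun v : ℂ => (p.1, v)) ((0:ℂ), (1:ℂ)) p.2 :=
    (hasDerivAt_const p.2 p.1).prodMk (hasDerivAt_id p.2)
  have h2 : HasFDerivAt F (fderiv ℂ F p) (p.1, p.2) := by
    rw [Prod.mk.eta]; exact h.hasFDerivAt
  exact (h2.comp_hasDerivAt p.2 h1).deriv

lemma pd1_analytic {F : ℂ × ℂ → ℂ} {V : Set (ℂ × ℂ)} (hV : IsOpen V)
    (hA : AnalyticOnNhd ℂ F V) : AnalyticOnNhd ℂ (pd1 F) V := by
  intro p hp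
  have h2 : AnalyticAt ℂ
      ((ContinuousLinearMap.apply ℂ ℂ ((1:ℂ), (0:ℂ))) ∘ (fderiv ℂ F)) p :=
    (ContinuousLinearMap.apply ℂ ℂ ((1:ℂ), (0:ℂ))).comp_analyticOnNhd hA.fderiv p hp
  refine h2.congr ?_
  filter_upwards [hV.eventually_mem hp] with q hq
  simpa using (pd1_eq_fderiv ((hA q hq).differentiableAt)).symm

lemma pd2_analytic {F : ℂ × ℂ → ℂ} {V : Set (ℂ × ℂ)} (hV : IsOpen V)
    (hA : AnalyticOnNhd ℂ F V) : AnalyticOnNhd ℂ (pd2 F) V := by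
  intro p hp
  have h2 : AnalyticAt ℂ
      ((ContinuousLinearMap.apply ℂ ℂ ((0:ℂ), (1:ℂ))) ∘ (fderiv ℂ F)) p :=
    (ContinuousLinearMap.apply ℂ ℂ ((0:ℂ), (1:ℂ))).comp_analyticOnNhd hA.fderiv p hp
  refine h2.congr ?_
  filter_upwards [hV.eventually_mem hp] with q hq
  simpa using (pd2_eq_fderiv ((hA q hq).differentiableAt)).symm

lemma pd1_fderiv_apply {F : ℂ × ℂ → ℂ} {p : ℂ × ℂ}
    (hd2 : DifferentiableAt ℂ (fderiv ℂ F) p) (v : ℂ × ℂ) :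
    pd1 (fun q => fderiv ℂ F q v) p = fderiv ℂ (fderiv ℂ F) p (1, 0) v := by
  have h1 : HasFDerivAt (fun q => fderiv ℂ F q v)
      ((ContinuousLinearMap.apply ℂ ℂ v).comp (fderiv ℂ (fderiv ℂ F) p)) p :=
    (ContinuousLinearMap.apply ℂ ℂ v).hasFDerivAt.comp p hd2.hasFDerivAt
  rw [pd1_eq_fderiv h1.differentiableAt, h1.fderiv]
  simp

lemma pd2_fderiv_apply {F : ℂ × ℂ → ℂ} {p : ℂ × ℂ}
    (hd2 : DifferentiableAt ℂ (fderiv ℂ F) p) (v : ℂ × ℂ) :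
    pd2 (fun q => fderiv ℂ F q v) p = fderiv ℂ (fderiv ℂ F) p (0, 1) v := by
  have h1 : HasFDerivAt (fun q => fderiv ℂ F q v)
      ((ContinuousLinearMap.apply ℂ ℂ v).comp (fderiv ℂ (fderiv ℂ F) p)) p :=
    (ContinuousLinearMap.apply ℂ ℂ v).hasFDerivAt.comp p hd2.hasFDerivAt
  rw [pd2_eq_fderiv h1.differentiableAt, h1.fderiv]
  simp

lemma pd_comm {F : ℂ × ℂ → ℂ} {V : Set (ℂ × ℂ)} (hV : IsOpen V)
    (hA : AnalyticOnNhd ℂ F V) {p : ℂ × ℂ} (hp : p ∈ V) :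
    pd1 (pd2 F) p = pd2 (pd1 F) p := by
  have hd2 : DifferentiableAt ℂ (fderiv ℂ F) p := (hA.fderiv p hp).differentiableAt
  have hev : ∀ᶠ q in 𝓝 p, HasFDerivAt F (fderiv ℂ F q) q := by
    filter_upwards [hV.eventually_mem hp] with q hq using
      ((hA q hq).differentiableAt).hasFDerivAt
  have hsymm := second_derivative_symmetric_of_eventually hev hd2.hasFDerivAt
  have e1 : pd1 (pd2 F) p = pd1 (fun q => fderiv ℂ F q (0, 1)) p := by
    apply Filter.EventuallyEq.deriv_eq
    filter_upwards [hline1 hV hp] with u hu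
    exact pd2_eq_fderiv ((hA _ hu).differentiableAt)
  have e2 : pd2 (pd1 F) p = pd2 (fun q => fderiv ℂ F q (1, 0)) p := by
    apply Filter.EventuallyEq.deriv_eq
    filter_upwards [hline2 hV hp] with v hv
    exact pd1_eq_fderiv ((hA _ hv).differentiableAt)
  rw [e1, e2, pd1_fderiv_apply hd2, pd2_fderiv_apply hd2]
  exact hsymm _ _

lemma pd2_iter_analytic {F : ℂ × ℂ → ℂ} {V : Set (ℂ × ℂ)} (hV : IsOpen V)
    (hA : AnalyticOnNhd ℂ F V) (b : ℕ) : AnalyticOnNhd ℂ (pd2^[b] F) V := by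
  induction b with
  | zero => exact hA
  | succ b ih =>
    rw [Function.iterate_succ_apply']
    exact pd2_analytic hV ih

lemma pd1_pd2_iter_comm {F : ℂ × ℂ → ℂ} {V : Set (ℂ × ℂ)} (hV : IsOpen V)
    (hA : AnalyticOnNhd ℂ F V) (b : ℕ) :
    Set.EqOn (pd1 (pd2^[b] F)) (pd2^[b] (pd1 F)) V := by
  induction b with
  | zero => exact fun p _ => rfl
  | succ b ih =>
    intro p hp
    rw [Function.iterate_succ_apply']
    calc pd1 (pd2 (pd2^[b] F)) p
        = pd2 (pd1 (pd2^[b] F)) p := pd_comm hV (pd2_iter_analytic hV hA b) hp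
      _ = pd2 (pd2^[b] (pd1 F)) p := pd2_congr hV ih hp
      _ = pd2^[b+1] (pd1 F) p := by rw [Function.iterate_succ_apply']

lemma iter_comm {F : ℂ × ℂ → ℂ} {V : Set (ℂ × ℂ)} (hV : IsOpen V)
    (hA : AnalyticOnNhd ℂ F V) (a b : ℕ) :
    Set.EqOn (pd1^[a] (pd2^[b] F)) (pd2^[b] (pd1^[a] F)) V := by
  induction a generalizing F with
  | zero => exact fun p _ => rfl
  | succ a ih =>
    intro p hp
    rw [Function.iterate_succ_apply]
    calc pd1^[a] (pd1 (pd2^[b] F)) p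
        = pd1^[a] (pd2^[b] (pd1 F)) p :=
          pd1_iter_congr hV (pd1_pd2_iter_comm hV hA b) a hp
      _ = pd2^[b] (pd1^[a] (pd1 F)) p := ih (pd1_analytic hV hA) hp
      _ = pd2^[b] (pd1^[a+1] F) p := by rw [Function.iterate_succ_apply]

/-- The key one-variable commutation lemma. -/
lemma key (g : ℂ → ℂ) (W : Set ℂ) (hW : IsOpen W) (hg : DifferentiableOn ℂ g W)
    (z c : ℂ) (hz : z ∈ W) (m n : ℕ) :
    iteratedDeriv n (fun v => iteratedDeriv m
        (fun u => g (((z + v) / (1 + c * v) + u) / (1 + c * u))) 0) 0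
      = iteratedDeriv m (fun v => iteratedDeriv n
        (fun u => g (((z + v) / (1 + c * v) + u) / (1 + c * u))) 0) 0 := by
  set Φ : ℂ × ℂ → ℂ :=
    fun p => (z + p.1 + p.2 + p.1 * p.2 * c) / ((1 + c * p.1) * (1 + c * p.2)) with hΦdef
  set H : ℂ × ℂ → ℂ := fun p => g (Φ p) with hHdef
  set V : Set (ℂ × ℂ) :=
    {p | (1 + c * p.1) * (1 + c * p.2) ≠ 0 ∧ Φ p ∈ W} with hVdef
  -- V is open
  have hS : IsOpen {p : ℂ × ℂ | (1 + c * p.1) * (1 + c * p.2) ≠ 0} := by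
    have : Continuous fun p : ℂ × ℂ => (1 + c * p.1) * (1 + c * p.2) := by fun_prop
    exact isOpen_ne.preimage this
  have hΦcont : ContinuousOn Φ {p : ℂ × ℂ | (1 + c * p.1) * (1 + c * p.2) ≠ 0} := by
    apply ContinuousOn.div
    · fun_prop
    · fun_prop
    · exact fun p hp => hp
  have hV : IsOpen V := by
    exact hΦcont.isOpen_inter_preimage hS hW
  -- H is analytic on V
  have hΦan : ∀ p ∈ V, AnalyticAt ℂ Φ p := by
    intro p hp
    exact AnalyticAt.div
      (((analyticAt_const.add analyticAt_fst).add analyticAt_snd).add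
        ((analyticAt_fst.mul analyticAt_snd).mul analyticAt_const))
      ((analyticAt_const.add (analyticAt_const.mul analyticAt_fst)).mul
        (analyticAt_const.add (analyticAt_const.mul analyticAt_snd)))
      hp.1
  have hHan : AnalyticOnNhd ℂ H V := by
    intro p hp
    exact ((hg.analyticOnNhd hW) (Φ p) hp.2).comp (hΦan p hp)
  -- (0,0) ∈ V
  have h00 : ((0 : ℂ), (0 : ℂ)) ∈ V := by
    constructor
    · simp
    · simpa [hΦdef] using hz
  -- symmetry of H
  have hHs : (fun p : ℂ × ℂ => H (p.2, p.1)) = H := by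
    funext p
    simp only [hHdef]
    congr 1
    simp only [hΦdef]
    ring_nf
  -- the eventual identification with pd-iterates
  have hstep : ∀ k : ℕ,
      (fun v => iteratedDeriv k (fun u => g (((z + v) / (1 + c * v) + u) / (1 + c * u))) 0)
        =ᶠ[𝓝 (0 : ℂ)] fun v => (pd1^[k] H) (0, v) := by
    intro k
    have hone : ∀ᶠ v : ℂ in 𝓝 0, 1 + c * v ≠ 0 := by
      have hc : ContinuousAt (fun v : ℂ => 1 + c * v) 0 := by fun_prop
      have := hc.eventually_ne (by norm_num : (1 : ℂ) + c * 0 ≠ 0)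
      simpa using this
    filter_upwards [hone] with v hv
    rw [← iterDeriv_pd1]
    congr 1
    funext u
    show g (((z + v) / (1 + c * v) + u) / (1 + c * u)) = g (Φ (u, v))
    congr 1
    simp only [hΦdef]
    rw [div_add' _ _ _ hv, div_div]
    ring_nf
  have e3 : pd2^[n] (pd1^[m] H) (0, 0) = pd1^[n] (pd2^[m] H) (0, 0) := by
    conv_lhs => rw [← hHs, pd1_iter_swap]
    rw [pd2_iter_swap]
  rw [(hstep m).iteratedDeriv_eq n, (hstep n).iteratedDeriv_eq m,
      iterDeriv_pd2 n (pd1^[m] H) 0 0, iterDeriv_pd2 m (pd1^[n] H) 0 0, e3]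
  exact iter_comm hV hHan n m h00

lemma PM_left (k m : ℕ) (f : ℂ × ℂ → ℂ) (z w : ℂ) :
    PM k 0 (fun p => PM m 0 f p.1 p.2) z w
      = iteratedDeriv k (fun v => iteratedDeriv m
          (fun u => f (((z + v) / (1 + w * v) + u) / (1 + w * u), w)) 0) 0 := by
  simp [PM, iteratedDeriv_zero]

lemma PM_right (k m : ℕ) (f : ℂ × ℂ → ℂ) (z w : ℂ) :
    PM 0 k (fun p => PM 0 m f p.1 p.2) z w
      = iteratedDeriv k (fun v => iteratedDeriv m
          (fun u => f (z, ((w + v) / (1 + z * v) + u) / (1 + z * u))) 0) 0 := by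
  simp [PM, iteratedDeriv_zero]

/-- pure Peschl–Minda operators of the same type commute. -/
theorem stmt11 (U : Set (ℂ × ℂ)) (hU : IsOpen U) (hUO : U ⊆ Oset)
    (f : ℂ × ℂ → ℂ) (hf : DifferentiableOn ℂ f U) (m n : ℕ) :
    (∀ z w : ℂ, (z, w) ∈ U →
        PM n 0 (fun p => PM m 0 f p.1 p.2) z w
          = PM m 0 (fun p => PM n 0 f p.1 p.2) z w) ∧
    (∀ z w : ℂ, (z, w) ∈ U →
        PM 0 n (fun p => PM 0 m f p.1 p.2) z w
          = PM 0 m (fun p => PM 0 n f p.1 p.2) z w) := by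
  constructor
  · intro z w hzw
    rw [PM_left n m f z w, PM_left m n f z w]
    have hW : IsOpen {x : ℂ | (x, w) ∈ U} := hU.preimage (by fun_prop)
    have hg : DifferentiableOn ℂ (fun x => f (x, w)) {x : ℂ | (x, w) ∈ U} := by
      apply hf.comp
      · exact (differentiable_id.prodMk (differentiable_const w)).differentiableOn
      · exact fun x hx => hx
    exact key (fun x => f (x, w)) _ hW hg z w hzw m n
  · intro z w hzw
    rw [PM_right n m f z w, PM_right m n f z w]
    have hW : IsOpen {y : ℂ | (z, y) ∈ U} := hU.preimage (by fun_prop)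
    have hg : DifferentiableOn ℂ (fun y => f (z, y)) {y : ℂ | (z, y) ∈ U} := by
      apply hf.comp
      · exact ((differentiable_const z).prodMk differentiable_id).differentiableOn
      · exact fun y hy => hy
    exact key (fun y => f (z, y)) _ hW hg w z hzw m n
end

section
/- Let U ⊆ O be open, let f : ℂ × ℂ → ℂ be holomorphic on U, let n ∈ ℕ, and let (z,w) ∈ U. Then D^{n+1,0} f(z,w) = (1 − z·w) · iteratedDeriv (n+1) (fun ζ => (1 − ζ·w)^n · f(ζ, w)) z, and symmetrically D^{0,n+1} f(z,w) = (1 − z·w) · iteratedDeriv (n+1) (fun η => (1 − z·η)^n · f(z, η)) w. -/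
open Filter

noncomputable def Lam (w : ℂ) (g : ℂ → ℂ) : ℂ → ℂ := fun ζ => (1 - ζ * w) ^ 2 * deriv g ζ

lemma iteratedDeriv_const_mul'' (m : ℕ) (c : ℂ) (F : ℂ → ℂ) :
    iteratedDeriv m (fun x => c * F x) = fun x => c * iteratedDeriv m F x := by
  induction m with
  | zero => simp
  | succ m ih =>
    funext x
    rw [iteratedDeriv_succ, iteratedDeriv_succ, ih]
    exact deriv_const_mul_field c

lemma evEq_iteratedDeriv (m : ℕ) : ∀ {F G : ℂ → ℂ} {x : ℂ}, F =ᶠ[nhds x] G →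
    iteratedDeriv m F x = iteratedDeriv m G x := by
  induction m with
  | zero => intro F G x h; simpa using h.self_of_nhds
  | succ m ih =>
    intro F G x h
    rw [iteratedDeriv_succ', iteratedDeriv_succ']
    exact ih h.deriv

lemma iterDeriv_diffAt {V : Set ℂ} (hV : IsOpen V) {F : ℂ → ℂ}
    (hF : DifferentiableOn ℂ F V) (k : ℕ) {ζ : ℂ} (hζ : ζ ∈ V) :
    DifferentiableAt ℂ (iteratedDeriv k F) ζ := by
  have hA : AnalyticOnNhd ℂ F V := hF.analyticOnNhd hV
  have : AnalyticOnNhd ℂ (iteratedDeriv k F) V := by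
    induction k with
    | zero => simpa using hA
    | succ k ihk => rw [iteratedDeriv_succ]; exact ihk.deriv
  exact (this ζ hζ).differentiableAt

lemma iterDeriv_hasDerivAt {V : Set ℂ} (hV : IsOpen V) {F : ℂ → ℂ}
    (hF : DifferentiableOn ℂ F V) (k : ℕ) {ζ : ℂ} (hζ : ζ ∈ V) :
    HasDerivAt (iteratedDeriv k F) (iteratedDeriv (k + 1) F ζ) ζ := by
  rw [iteratedDeriv_succ]
  exact (iterDeriv_diffAt hV hF k hζ).hasDerivAt

lemma LamDiff {V : Set ℂ} (hV : IsOpen V) {g : ℂ → ℂ} (hg : DifferentiableOn ℂ g V) (w : ℂ) :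
    DifferentiableOn ℂ (Lam w g) V := by
  have hd : DifferentiableOn ℂ (deriv g) V := ((hg.analyticOnNhd hV).deriv).differentiableOn
  exact DifferentiableOn.mul (by fun_prop) hd

/-- Leibniz-type identity for multiplying by the linear factor `1 - x*w`. -/
lemma lin_mul_iter {V : Set ℂ} (hV : IsOpen V) (w : ℂ) {F : ℂ → ℂ}
    (hF : DifferentiableOn ℂ F V) :
    ∀ (m : ℕ), ∀ ζ ∈ V, iteratedDeriv (m + 1) (fun x => (1 - x * w) * F x) ζ
      = (1 - ζ * w) * iteratedDeriv (m + 1) F ζ - ((m : ℂ) + 1) * w * iteratedDeriv m F ζ := by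
  intro m
  induction m with
  | zero =>
    intro ζ hζ
    have hl : HasDerivAt (fun x : ℂ => 1 - x * w) (-w) ζ := by
      simpa using ((hasDerivAt_id ζ).mul_const w).const_sub 1
    have hFd : HasDerivAt F (deriv F ζ) ζ := ((hF ζ hζ).differentiableAt (hV.mem_nhds hζ)).hasDerivAt
    have : deriv (fun x => (1 - x * w) * F x) ζ = _ := (hl.mul hFd).deriv
    rw [iteratedDeriv_one, iteratedDeriv_one, this]
    simp [iteratedDeriv_zero]
    ring
  | succ m ih =>
    intro ζ hζ
    rw [iteratedDeriv_succ]
    have hev : deriv (iteratedDeriv (m + 1) (fun x => (1 - x * w) * F x)) ζ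
        = deriv (fun x => (1 - x * w) * iteratedDeriv (m + 1) F x
            - ((m : ℂ) + 1) * w * iteratedDeriv m F x) ζ := by
      apply Filter.EventuallyEq.deriv_eq
      filter_upwards [hV.mem_nhds hζ] with x hx
      exact ih x hx
    rw [hev]
    have hl : HasDerivAt (fun x : ℂ => 1 - x * w) (-w) ζ := by
      simpa using ((hasDerivAt_id ζ).mul_const w).const_sub 1
    have h1 : HasDerivAt (iteratedDeriv (m + 1) F) (iteratedDeriv (m + 2) F ζ) ζ :=
      iterDeriv_hasDerivAt hV hF (m + 1) hζ
    have h0 : HasDerivAt (iteratedDeriv m F) (iteratedDeriv (m + 1) F ζ) ζ :=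
      iterDeriv_hasDerivAt hV hF m hζ
    have : deriv (fun x => (1 - x * w) * iteratedDeriv (m + 1) F x
        - ((m : ℂ) + 1) * w * iteratedDeriv m F x) ζ = _ :=
      ((hl.mul h1).sub (h0.const_mul (((m : ℂ) + 1) * w))).deriv
    rw [this]
    push_cast
    ring

/-- Pure differential identity for the iterates of `Lam`. -/
lemma keyC {V : Set ℂ} (hV : IsOpen V) (w : ℂ) :
    ∀ (n : ℕ) {g : ℂ → ℂ}, DifferentiableOn ℂ g V → ∀ ζ ∈ V,
      ((Lam w)^[n + 1] g) ζ
        = (1 - ζ * w) ^ (n + 2) * iteratedDeriv (n + 1) (fun x => (1 - x * w) ^ n * g x) ζ := by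
  intro n
  induction n with
  | zero =>
    intro g hg ζ hζ
    have : (fun x => (1 - x * w) ^ 0 * g x) = g := by funext x; simp
    rw [this]
    simp [Lam, iteratedDeriv_one]
  | succ n ih =>
    intro g hg ζ hζ
    have hGn : DifferentiableOn ℂ (fun x => (1 - x * w) ^ n * g x) V :=
      DifferentiableOn.mul (by fun_prop) hg
    rw [Function.iterate_succ_apply']
    have hev : deriv ((Lam w)^[n + 1] g) ζ
        = deriv (fun x => (1 - x * w) ^ (n + 2)
            * iteratedDeriv (n + 1) (fun y => (1 - y * w) ^ n * g y) x) ζ := by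
      apply Filter.EventuallyEq.deriv_eq
      filter_upwards [hV.mem_nhds hζ] with x hx
      exact ih hg x hx
    have hP : HasDerivAt (fun x : ℂ => (1 - x * w) ^ (n + 2))
        (((n : ℂ) + 2) * (1 - ζ * w) ^ (n + 1) * (-w)) ζ := by
      have hl : HasDerivAt (fun x : ℂ => 1 - x * w) (-w) ζ := by
        simpa using ((hasDerivAt_id ζ).mul_const w).const_sub 1
      have : HasDerivAt (fun x : ℂ => (1 - x * w) ^ (n + 2)) _ ζ := hl.pow (n + 2)
      simpa using this.congr_deriv (by push_cast; ring)
    have hR : HasDerivAt (iteratedDeriv (n + 1) (fun y => (1 - y * w) ^ n * g y))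
        (iteratedDeriv (n + 2) (fun y => (1 - y * w) ^ n * g y) ζ) ζ :=
      iterDeriv_hasDerivAt hV hGn (n + 1) hζ
    have hder : deriv (fun x => (1 - x * w) ^ (n + 2)
        * iteratedDeriv (n + 1) (fun y => (1 - y * w) ^ n * g y) x) ζ = _ := (hP.mul hR).deriv
    have hlm := lin_mul_iter hV w hGn (n + 1) ζ hζ
    have hfun : (fun x => (1 - x * w) ^ (n + 1) * g x)
        = fun x => (1 - x * w) * ((1 - x * w) ^ n * g x) := by
      funext x; ring
    show Lam w ((Lam w)^[n + 1] g) ζ = _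
    rw [Lam, hev, hder, hfun, hlm]
    push_cast
    ring

/-- Iterated pullback along the Möbius map. -/
lemma keyA {V : Set ℂ} (hV : IsOpen V) {z : ℂ} (w : ℂ) (hz : z ∈ V) (hzw : z * w ≠ 1) :
    ∀ (m : ℕ) (g : ℂ → ℂ), DifferentiableOn ℂ g V →
      iteratedDeriv m (fun u => g ((z + u) / (1 + w * u))) 0
        = ((1 - z * w)⁻¹) ^ m * ((Lam w)^[m] g) z := by
  have h1zw : (1 : ℂ) - z * w ≠ 0 := sub_ne_zero.mpr (Ne.symm hzw)
  intro m
  induction m with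
  | zero => intro g hg; simp
  | succ m ih =>
    intro g hg
    set φ : ℂ → ℂ := fun u => (z + u) / (1 + w * u) with hφ
    set W : Set ℂ := {u | 1 + w * u ≠ 0} ∩ φ ⁻¹' V with hWdef
    have hSopen : IsOpen {u : ℂ | 1 + w * u ≠ 0} := by
      have : Continuous fun u : ℂ => 1 + w * u := by fun_prop
      exact isOpen_ne.preimage this
    have hφc : ContinuousOn φ {u : ℂ | 1 + w * u ≠ 0} := by
      apply ContinuousOn.div (by fun_prop) (by fun_prop)
      intro x hx; exact hx
    have hWopen : IsOpen W := hφc.isOpen_inter_preimage hSopen hV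
    have h0W : (0 : ℂ) ∈ W := by
      constructor
      · show (1 : ℂ) + w * 0 ≠ 0; simp
      · show φ 0 ∈ V
        simp only [hφ, mul_zero, add_zero, div_one]
        exact hz
    have hderiv : ∀ u ∈ W, deriv (fun u => g (φ u)) u
        = (1 - z * w)⁻¹ * Lam w g (φ u) := by
      intro u hu
      obtain ⟨hu1, hu2⟩ := hu
      have hu1 : (1 : ℂ) + w * u ≠ 0 := hu1
      have hφd : HasDerivAt φ ((1 - z * w) / (1 + w * u) ^ 2) u := by
        have hnum : HasDerivAt (fun u : ℂ => z + u) 1 u := by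
          simpa using (hasDerivAt_id u).const_add z
        have hden : HasDerivAt (fun u : ℂ => 1 + w * u) w u := by
          simpa using ((hasDerivAt_id u).const_mul w).const_add 1
        have := hnum.div hden hu1
        apply this.congr_deriv
        field_simp
        ring
      have hgd : HasDerivAt g (deriv g (φ u)) (φ u) :=
        ((hg (φ u) hu2).differentiableAt (hV.mem_nhds hu2)).hasDerivAt
      have hcomp : HasDerivAt (fun u => g (φ u))
          (deriv g (φ u) * ((1 - z * w) / (1 + w * u) ^ 2)) u := hgd.comp u hφd
      rw [hcomp.deriv]
      have hmo : 1 - φ u * w = (1 - z * w) / (1 + w * u) := by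
        rw [hφ]
        show 1 - (z + u) / (1 + w * u) * w = (1 - z * w) / (1 + w * u)
        rw [eq_div_iff hu1, sub_mul, div_mul_eq_mul_div, div_mul_cancel₀ _ hu1]
        ring
      rw [Lam, hmo]
      field_simp
    rw [iteratedDeriv_succ']
    have hev : deriv (fun u => g (φ u)) =ᶠ[nhds 0]
        fun u => (1 - z * w)⁻¹ * Lam w g (φ u) := by
      filter_upwards [hWopen.mem_nhds h0W] with u hu using hderiv u hu
    rw [evEq_iteratedDeriv m hev, iteratedDeriv_const_mul'']
    have hre : (fun u => Lam w g (φ u)) = fun u => Lam w g ((z + u) / (1 + w * u)) := rfl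
    show (1 - z * w)⁻¹ * iteratedDeriv m (fun u => Lam w g (φ u)) 0 = _
    rw [hre, ih (Lam w g) (LamDiff hV hg w), Function.iterate_succ_apply]
    ring

/-- The one-variable main lemma. -/
lemma keyMain {V : Set ℂ} (hV : IsOpen V) {z : ℂ} (w : ℂ) (hz : z ∈ V) (hzw : z * w ≠ 1)
    (n : ℕ) {g : ℂ → ℂ} (hg : DifferentiableOn ℂ g V) :
    iteratedDeriv (n + 1) (fun u => g ((z + u) / (1 + w * u))) 0
      = (1 - z * w) * iteratedDeriv (n + 1) (fun ζ => (1 - ζ * w) ^ n * g ζ) z := by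
  have h1zw : (1 : ℂ) - z * w ≠ 0 := sub_ne_zero.mpr (Ne.symm hzw)
  rw [keyA hV w hz hzw (n + 1) g hg, keyC hV w n hg z hz]
  rw [inv_pow]
  field_simp
  ring

theorem stmt12 (U : Set (ℂ × ℂ)) (hU : IsOpen U) (hUO : U ⊆ Oset)
    (f : ℂ × ℂ → ℂ) (hf : DifferentiableOn ℂ f U) (n : ℕ)
    (z w : ℂ) (hzw : (z, w) ∈ U) :
    PM (n + 1) 0 f z w
        = (1 - z * w) * iteratedDeriv (n + 1) (fun ζ => (1 - ζ * w) ^ n * f (ζ, w)) z ∧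
    PM 0 (n + 1) f z w
        = (1 - z * w) * iteratedDeriv (n + 1) (fun η => (1 - z * η) ^ n * f (z, η)) w := by
  have hO : z * w ≠ 1 := hUO hzw
  constructor
  · have h1 : PM (n + 1) 0 f z w
        = iteratedDeriv (n + 1) (fun u => f ((z + u) / (1 + w * u), w)) 0 := by
      unfold PM
      rw [iteratedDeriv_zero]
      simp
    rw [h1]
    set V : Set ℂ := {ζ | (ζ, w) ∈ U} with hVdef
    have hVopen : IsOpen V := hU.preimage (by fun_prop)
    have hzV : z ∈ V := hzw
    have hg : DifferentiableOn ℂ (fun ζ => f (ζ, w)) V := by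
      have : DifferentiableOn ℂ (f ∘ fun ζ : ℂ => (ζ, w)) V :=
        hf.comp (by fun_prop : Differentiable ℂ fun ζ : ℂ => (ζ, w)).differentiableOn
          (fun ζ hζ => hζ)
      exact this
    exact keyMain hVopen w hzV hO n hg
  · have h1 : PM 0 (n + 1) f z w
        = iteratedDeriv (n + 1) (fun v => f (z, (w + v) / (1 + z * v))) 0 := by
      unfold PM
      simp
    rw [h1]
    set V : Set ℂ := {η | (z, η) ∈ U} with hVdef
    have hVopen : IsOpen V := hU.preimage (by fun_prop)
    have hwV : w ∈ V := hzw
    have hg : DifferentiableOn ℂ (fun η => f (z, η)) V := by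
      have : DifferentiableOn ℂ (f ∘ fun η : ℂ => (z, η)) V :=
        hf.comp (by fun_prop : Differentiable ℂ fun η : ℂ => (z, η)).differentiableOn
          (fun η hη => hη)
      exact this
    have hO' : w * z ≠ 1 := by rwa [mul_comm]
    have := keyMain hVopen z hwV hO' n hg
    rw [this]
    have hfun : (fun η => (1 - η * z) ^ n * f (z, η)) = fun η => (1 - z * η) ^ n * f (z, η) := by
      funext η; rw [mul_comm η z]
    rw [hfun, mul_comm w z]
end

section
/- Let 𝔻 := {z ∈ ℂ : |z| < 1}, let f : ℂ → ℂ be holomorphic on 𝔻, let n ∈ ℕ and z ∈ 𝔻. Then D^{n+1} f(z) = (1 − |z|²) · iteratedDeriv (n+1) (fun ζ => (1 − ζ·conj z)^n · f ζ) z, where conj z denotes the complex conjugate of z. (For holomorphic f this expresses the Wirtinger derivative ∂^{n+1} of the smooth function z ↦ (1−|z|²)^n f(z) as the holomorphic derivative with conj z frozen.) -/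
open Topology Filter Complex

/-- The classical one-variable Peschl–Minda derivative of order `n` at `z ∈ 𝔻`. -/
noncomputable def PM1 (n : ℕ) (f : ℂ → ℂ) (z : ℂ) : ℂ :=
  iteratedDeriv n (fun u => f ((z + u) / (1 + (starRingEnd ℂ) z * u))) 0

namespace Stmt14Aux

lemma disk_open : IsOpen {z : ℂ | ‖z‖ < 1} :=
  isOpen_lt continuous_norm continuous_const

lemma itd_const_mul (c : ℂ) : ∀ (n : ℕ) (f : ℂ → ℂ) (x : ℂ),
    iteratedDeriv n (fun y => c * f y) x = c * iteratedDeriv n f x := by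
  intro n
  induction n with
  | zero => intro f x; simp
  | succ n ih =>
    intro f x
    rw [iteratedDeriv_succ', deriv_const_mul_field' c, iteratedDeriv_succ']
    exact ih (deriv f) x

lemma itd_add {s : Set ℂ} (hs : IsOpen s) :
    ∀ (n : ℕ) (f g : ℂ → ℂ), AnalyticOnNhd ℂ f s → AnalyticOnNhd ℂ g s → ∀ x ∈ s,
    iteratedDeriv n (fun y => f y + g y) x = iteratedDeriv n f x + iteratedDeriv n g x := by
  intro n
  induction n with
  | zero => intro f g _ _ x _; simp
  | succ n ih =>
    intro f g hf hg x hx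
    rw [iteratedDeriv_succ', iteratedDeriv_succ' (f := f), iteratedDeriv_succ' (f := g)]
    have hev : (deriv fun y => f y + g y) =ᶠ[𝓝 x] fun y => deriv f y + deriv g y := by
      filter_upwards [hs.mem_nhds hx] with y hy
      exact deriv_add ((hf y hy).differentiableAt) ((hg y hy).differentiableAt)
    rw [hev.iteratedDeriv_eq n]
    exact ih (deriv f) (deriv g) hf.deriv hg.deriv x hx

lemma itd_linear {s : Set ℂ} (hs : IsOpen s) (a b : ℂ) :
    ∀ (m : ℕ) (g : ℂ → ℂ), AnalyticOnNhd ℂ g s → ∀ x ∈ s,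
    iteratedDeriv (m + 1) (fun ζ => (a + b * ζ) * g ζ) x
      = (a + b * x) * iteratedDeriv (m + 1) g x + ((m : ℂ) + 1) * b * iteratedDeriv m g x := by
  intro m
  induction m with
  | zero =>
    intro g hg x hx
    have h1 : HasDerivAt (fun ζ : ℂ => a + b * ζ) b x := by
      simpa using ((hasDerivAt_id x).const_mul b).const_add a
    have h2 : HasDerivAt g (deriv g x) x := ((hg x hx).differentiableAt).hasDerivAt
    have h3 : HasDerivAt (fun ζ => (a + b * ζ) * g ζ) _ x := h1.mul h2
    rw [iteratedDeriv_one, iteratedDeriv_one, iteratedDeriv_zero, h3.deriv]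
    push_cast
    ring
  | succ m ih =>
    intro g hg x hx
    rw [iteratedDeriv_succ' (n := m + 1)]
    have hev : (deriv fun ζ => (a + b * ζ) * g ζ)
        =ᶠ[𝓝 x] fun ζ => b * g ζ + (a + b * ζ) * deriv g ζ := by
      filter_upwards [hs.mem_nhds hx] with y hy
      have h1 : HasDerivAt (fun ζ : ℂ => a + b * ζ) b y := by
        simpa using ((hasDerivAt_id y).const_mul b).const_add a
      have h2 : HasDerivAt g (deriv g y) y := ((hg y hy).differentiableAt).hasDerivAt
      exact (h1.mul h2).deriv
    rw [hev.iteratedDeriv_eq (m + 1)]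
    have hlin : AnalyticOnNhd ℂ (fun ζ : ℂ => a + b * ζ) s :=
      analyticOnNhd_const.add (analyticOnNhd_const.mul analyticOnNhd_id)
    have hbg : AnalyticOnNhd ℂ (fun ζ => b * g ζ) s := analyticOnNhd_const.mul hg
    have hrest : AnalyticOnNhd ℂ (fun ζ => (a + b * ζ) * deriv g ζ) s := hlin.mul hg.deriv
    rw [itd_add hs (m + 1) _ _ hbg hrest x hx, itd_const_mul b (m + 1) g x,
      ih (deriv g) hg.deriv x hx, ← iteratedDeriv_succ', ← iteratedDeriv_succ']
    push_cast
    ring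

lemma denom_ne {z u : ℂ} (hz : ‖z‖ < 1) (hu : ‖u‖ < 1) :
    1 + (starRingEnd ℂ) z * u ≠ 0 := by
  intro h
  have h1 : ‖(starRingEnd ℂ) z * u‖ = ‖z‖ * ‖u‖ := by
    simp [map_mul]
  have h2 : (starRingEnd ℂ) z * u = -1 := by linear_combination h
  rw [h2] at h1
  simp only [norm_neg, norm_one] at h1
  nlinarith [norm_nonneg z, norm_nonneg u]

lemma mem_disk {z u : ℂ} (hz : ‖z‖ < 1) (hu : ‖u‖ < 1) :
    ‖(z + u) / (1 + (starRingEnd ℂ) z * u)‖ < 1 := by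
  have hd := denom_ne hz hu
  have hdp : 0 < ‖1 + (starRingEnd ℂ) z * u‖ := norm_pos_iff.mpr hd
  rw [norm_div, div_lt_one hdp]
  have hsq : Complex.normSq (z + u) < Complex.normSq (1 + (starRingEnd ℂ) z * u) := by
    have e1 : Complex.normSq (z + u)
        = Complex.normSq z + Complex.normSq u + 2 * (z * (starRingEnd ℂ) u).re :=
      Complex.normSq_add z u
    have e2 : Complex.normSq (1 + (starRingEnd ℂ) z * u)
        = 1 + Complex.normSq z * Complex.normSq u + 2 * (z * (starRingEnd ℂ) u).re := by
      rw [Complex.normSq_add]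
      have e3 : (starRingEnd ℂ) ((starRingEnd ℂ) z * u) = z * (starRingEnd ℂ) u := by
        rw [map_mul, Complex.conj_conj]
      rw [one_mul, e3, Complex.normSq_mul, Complex.normSq_conj, Complex.normSq_one]
    have hz2 : Complex.normSq z < 1 := by
      rw [← Complex.sq_norm]; nlinarith [norm_nonneg z]
    have hu2 : Complex.normSq u < 1 := by
      rw [← Complex.sq_norm]; nlinarith [norm_nonneg u]
    rw [e1, e2]
    nlinarith
  have := Real.sqrt_lt_sqrt (Complex.normSq_nonneg _) hsq
  rw [Complex.norm_def, Complex.norm_def]; exact this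

lemma one_sub_ne {z : ℂ} (hz : ‖z‖ < 1) : (1 : ℂ) - z * (starRingEnd ℂ) z ≠ 0 := by
  rw [Complex.mul_conj]
  intro h
  have h2 : Complex.normSq z < 1 := by
    rw [← Complex.sq_norm]; nlinarith [norm_nonneg z]
  have := congrArg Complex.re h
  simp at this
  linarith

lemma hasDerivAt_phi {z u : ℂ} (hz : ‖z‖ < 1) (hu : ‖u‖ < 1) :
    HasDerivAt (fun u => (z + u) / (1 + (starRingEnd ℂ) z * u))
      ((1 - z * (starRingEnd ℂ) z) / (1 + (starRingEnd ℂ) z * u) ^ 2) u := by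
  have hd := denom_ne hz hu
  have h1 : HasDerivAt (fun u : ℂ => z + u) 1 u := (hasDerivAt_id u).const_add z
  have h2 : HasDerivAt (fun u : ℂ => 1 + (starRingEnd ℂ) z * u) ((starRingEnd ℂ) z) u := by
    simpa using ((hasDerivAt_id u).const_mul ((starRingEnd ℂ) z)).const_add 1
  have e : (1 - z * (starRingEnd ℂ) z)
      = 1 * (1 + (starRingEnd ℂ) z * u) - (z + u) * (starRingEnd ℂ) z := by ring
  rw [e]
  exact h1.div h2 hd

lemma comp_hda {f : ℂ → ℂ} (hf : DifferentiableOn ℂ f {z : ℂ | ‖z‖ < 1})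
    {z u : ℂ} (hz : ‖z‖ < 1) (hu : ‖u‖ < 1) :
    HasDerivAt (fun u => f ((z + u) / (1 + (starRingEnd ℂ) z * u)))
      (deriv f ((z + u) / (1 + (starRingEnd ℂ) z * u))
        * ((1 - z * (starRingEnd ℂ) z) / (1 + (starRingEnd ℂ) z * u) ^ 2)) u := by
  have hmem : (z + u) / (1 + (starRingEnd ℂ) z * u) ∈ {z : ℂ | ‖z‖ < 1} :=
    mem_disk hz hu
  have h1 : HasDerivAt f (deriv f ((z + u) / (1 + (starRingEnd ℂ) z * u)))
      ((z + u) / (1 + (starRingEnd ℂ) z * u)) :=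
    (hf.differentiableAt (disk_open.mem_nhds hmem)).hasDerivAt
  exact h1.comp u (hasDerivAt_phi hz hu)

lemma key {z : ℂ} (hz : ‖z‖ < 1) :
    ∀ (n : ℕ) (f : ℂ → ℂ), DifferentiableOn ℂ f {z : ℂ | ‖z‖ < 1} →
    iteratedDeriv (n + 1) (fun u => f ((z + u) / (1 + (starRingEnd ℂ) z * u))) 0
      = (1 - z * (starRingEnd ℂ) z)
          * iteratedDeriv (n + 1) (fun ζ => (1 - ζ * (starRingEnd ℂ) z) ^ n * f ζ) z := by
  intro n
  induction n with
  | zero =>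
    intro f hf
    have h0 : ‖(0 : ℂ)‖ < 1 := by simp
    have h := comp_hda hf hz h0
    simp only [mul_zero, add_zero, mul_one, one_pow, div_one] at h
    rw [iteratedDeriv_succ, iteratedDeriv_zero, iteratedDeriv_succ, iteratedDeriv_zero, h.deriv]
    have : (fun ζ : ℂ => (1 - ζ * (starRingEnd ℂ) z) ^ 0 * f ζ) = f := by
      funext ζ; simp
    rw [this]
    ring
  | succ n ih =>
    intro f hf
    have hfa : AnalyticOnNhd ℂ f {z : ℂ | ‖z‖ < 1} := hf.analyticOnNhd disk_open
    have hone := one_sub_ne hz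
    set c : ℂ := 1 - z * (starRingEnd ℂ) z with hc
    set g : ℂ → ℂ := fun ζ => (1 - ζ * (starRingEnd ℂ) z) ^ 2 * deriv f ζ with hg
    have hlin : AnalyticOnNhd ℂ (fun ζ : ℂ => 1 - ζ * (starRingEnd ℂ) z)
        {z : ℂ | ‖z‖ < 1} :=
      analyticOnNhd_const.sub (analyticOnNhd_id.mul analyticOnNhd_const)
    have hga : AnalyticOnNhd ℂ g {z : ℂ | ‖z‖ < 1} :=
      (hlin.pow 2).mul hfa.deriv
    have h0 : (0 : ℂ) ∈ {z : ℂ | ‖z‖ < 1} := by simp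
    -- step 1: differentiate once, realize as composition with g
    rw [iteratedDeriv_succ']
    have hev : (deriv fun u => f ((z + u) / (1 + (starRingEnd ℂ) z * u)))
        =ᶠ[𝓝 (0 : ℂ)]
          fun u => c⁻¹ * g ((z + u) / (1 + (starRingEnd ℂ) z * u)) := by
      filter_upwards [disk_open.mem_nhds h0] with u hu
      have hu' : ‖u‖ < 1 := hu
      rw [(comp_hda hf hz hu').deriv]
      have hd := denom_ne hz hu'
      have hfrac : 1 - (z + u) / (1 + (starRingEnd ℂ) z * u) * (starRingEnd ℂ) z
          = c / (1 + (starRingEnd ℂ) z * u) := by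
        rw [hc, div_mul_eq_mul_div, one_sub_div hd]; congr 1; ring
      simp only [hg, hfrac]
      field_simp
      ring
    rw [hev.iteratedDeriv_eq (n + 1),
      itd_const_mul c⁻¹ (n + 1) (fun u => g ((z + u) / (1 + (starRingEnd ℂ) z * u))) 0,
      ih g hga.differentiableOn]
    -- now express via q
    set q : ℂ → ℂ := fun ζ => (1 - ζ * (starRingEnd ℂ) z) ^ (n + 1) * f ζ with hq
    have hqa : AnalyticOnNhd ℂ q {z : ℂ | ‖z‖ < 1} := (hlin.pow (n + 1)).mul hfa
    have hzmem : z ∈ {z : ℂ | ‖z‖ < 1} := hz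
    have hev2 : (fun ζ => (1 - ζ * (starRingEnd ℂ) z) ^ n * g ζ)
        =ᶠ[𝓝 z] fun ζ => (1 + (-(starRingEnd ℂ) z) * ζ) * deriv q ζ
            + (((n : ℂ) + 1) * (starRingEnd ℂ) z) * q ζ := by
      filter_upwards [disk_open.mem_nhds hzmem] with ζ hζ
      have h1 : HasDerivAt (fun ζ : ℂ => 1 - ζ * (starRingEnd ℂ) z) (-(starRingEnd ℂ) z) ζ := by
        simpa using ((hasDerivAt_id ζ).mul_const ((starRingEnd ℂ) z)).const_sub 1
      have h2 : HasDerivAt f (deriv f ζ) ζ :=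
        ((hfa ζ hζ).differentiableAt).hasDerivAt
      have h3 : HasDerivAt q
          (((n : ℂ) + 1) * (1 - ζ * (starRingEnd ℂ) z) ^ n * (-(starRingEnd ℂ) z) * f ζ
            + (1 - ζ * (starRingEnd ℂ) z) ^ (n + 1) * deriv f ζ) ζ := by
        have : HasDerivAt (fun ζ => (1 - ζ * (starRingEnd ℂ) z) ^ (n + 1) * f ζ) _ ζ :=
          (h1.pow (n + 1)).mul h2
        simpa [hq, Nat.add_sub_cancel] using this
      rw [h3.deriv]
      simp only [hg]
      push_cast
      ring
    rw [hev2.iteratedDeriv_eq (n + 1)]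
    have hq' : AnalyticOnNhd ℂ (deriv q) {z : ℂ | ‖z‖ < 1} := hqa.deriv
    have hA : AnalyticOnNhd ℂ (fun ζ => (1 + (-(starRingEnd ℂ) z) * ζ) * deriv q ζ)
        {z : ℂ | ‖z‖ < 1} :=
      (analyticOnNhd_const.add (analyticOnNhd_const.mul analyticOnNhd_id)).mul hq'
    have hB : AnalyticOnNhd ℂ (fun ζ => (((n : ℂ) + 1) * (starRingEnd ℂ) z) * q ζ)
        {z : ℂ | ‖z‖ < 1} := analyticOnNhd_const.mul hqa
    rw [itd_add disk_open (n + 1) _ _ hA hB z hzmem,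
      itd_linear disk_open 1 (-(starRingEnd ℂ) z) n (deriv q) hq' z hzmem,
      itd_const_mul (((n : ℂ) + 1) * (starRingEnd ℂ) z) (n + 1) q z,
      ← iteratedDeriv_succ', ← iteratedDeriv_succ']
    have hone' : (1 : ℂ) - z * (starRingEnd ℂ) z ≠ 0 := one_sub_ne hz
    rw [hc]
    field_simp
    ring_nf

end Stmt14Aux

/-- `D^{n+1} f(z) = (1−|z|²)·∂^{n+1}[(1−ζ·conj z)^n f(ζ)]|_{ζ=z}` for `f`
holomorphic on the unit disk. -/
theorem stmt14 (f : ℂ → ℂ)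
    (hf : DifferentiableOn ℂ f {z : ℂ | ‖z‖ < 1})
    (n : ℕ) (z : ℂ) (hz : ‖z‖ < 1) :
    PM1 (n + 1) f z
      = (1 - (‖z‖ : ℂ) ^ 2)
          * iteratedDeriv (n + 1) (fun ζ => (1 - ζ * (starRingEnd ℂ) z) ^ n * f ζ) z := by
  have habs : ((‖z‖ : ℂ)) ^ 2 = z * (starRingEnd ℂ) z := by
    rw [Complex.mul_conj, ← Complex.sq_norm]
    norm_cast
  rw [PM1, habs]
  exact Stmt14Aux.key hz n f hf
end

section
/- Let (f₊, f₋) be a holomorphic pair on Ω, let (z,w) ∈ O, let R > 0 and let M ≥ 0 be such that |f₊((z+u)/(1+u·w), w)| ≤ M for every u ∈ ℂ with |u| = R and 1 + u·w ≠ 0. Then for every n ∈ ℕ: |D^{n,0} f₊(z,w)| ≤ n!·M / R^n. (The point of the pair hypothesis is that the entire extension of u ↦ f₊((z+u)/(1+u·w), w) across the possible pole u = −1/w is provided by f₋, so the Cauchy estimate applies for every radius R.) -/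
/-- A holomorphic pair on `Ω`: two functions holomorphic on `O` which agree under the
flip `(z,w) ↦ (1/w,1/z)`. -/
def IsHolPair (fp fm : ℂ × ℂ → ℂ) : Prop :=
  DifferentiableOn ℂ fp Oset ∧ DifferentiableOn ℂ fm Oset ∧
    ∀ z w : ℂ, z ≠ 0 → w ≠ 0 → z * w ≠ 1 → fp (z, w) = fm (1 / w, 1 / z)

lemma isOpen_Oset : IsOpen Oset :=
  IsOpen.preimage (continuous_fst.mul continuous_snd) isOpen_compl_singleton

open Complex Filter Real Set

/-- Cauchy estimates for the pure Peschl–Minda derivatives of a holomorphic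
pair on `Ω`. -/
theorem stmt15 (fp fm : ℂ × ℂ → ℂ) (h : IsHolPair fp fm)
    (z w : ℂ) (hzw : z * w ≠ 1) (R : ℝ) (hR : 0 < R) (M : ℝ) (hM : 0 ≤ M)
    (hbound : ∀ u : ℂ, ‖u‖ = R → 1 + u * w ≠ 0 →
      ‖fp ((z + u) / (1 + u * w), w)‖ ≤ M)
    (n : ℕ) :
    ‖PM n 0 fp z w‖ ≤ (n.factorial : ℝ) * M / R ^ n := by
  obtain ⟨hfp, hfm, hpair⟩ := h
  set F : ℂ → ℂ := fun u => fp ((z + u) / (1 + w * u), w) with hF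
  set g : ℂ → ℂ := fun u =>
    if 1 + w * u = 0 then fm (w⁻¹, 0) else fp ((z + u) / (1 + w * u), w) with hgdef
  have hgF : ∀ u : ℂ, 1 + w * u ≠ 0 → g u = F u := fun u hu => if_neg hu
  -- differentiability of g
  have hg : Differentiable ℂ g := by
    intro u₀
    by_cases h0 : 1 + w * u₀ = 0
    · have hw : w ≠ 0 := by rintro rfl; simp at h0
      have hz0 : z + u₀ ≠ 0 := by
        intro hcon
        apply hzw
        have hz' : z = -u₀ := by linear_combination hcon
        rw [hz']
        linear_combination -h0
      set G : ℂ → ℂ := fun u => fm (w⁻¹, (1 + w * u) / (z + u)) with hGdef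
      have hGd : DifferentiableAt ℂ G u₀ := by
        have hmem : ((w⁻¹ : ℂ), (1 + w * u₀) / (z + u₀)) ∈ Oset := by
          simp [Oset, h0]
        refine DifferentiableAt.comp u₀ (hfm.differentiableAt (isOpen_Oset.mem_nhds hmem)) ?_
        exact (differentiableAt_const _).prodMk
          (DifferentiableAt.div (by fun_prop) (by fun_prop) hz0)
      have hne : ∀ᶠ u in nhds u₀, z + u ≠ 0 := by
        have : {u : ℂ | z + u ≠ 0} ∈ nhds u₀ :=
          (IsOpen.preimage (by fun_prop) isOpen_compl_singleton).mem_nhds hz0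
        exact this
      have heq : g =ᶠ[nhds u₀] G := by
        filter_upwards [hne] with u hzu
        by_cases hd : 1 + w * u = 0
        · simp [hgdef, hGdef, hd]
        · rw [hgF u hd]
          have hzeta : (z + u) / (1 + w * u) ≠ 0 := div_ne_zero hzu hd
          have hprod : (z + u) / (1 + w * u) * w ≠ 1 := by
            intro hcon
            apply hzw
            rw [div_mul_eq_mul_div, div_eq_one_iff_eq hd] at hcon
            linear_combination hcon
          have hp := hpair ((z + u) / (1 + w * u)) w hzeta hw hprod
          rw [hF]
          simp only []
          rw [hp, one_div, one_div, inv_div]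
      exact heq.differentiableAt_iff.mpr hGd
    · have hmem : ((z + u₀) / (1 + w * u₀), w) ∈ Oset := by
        simp only [Oset, Set.mem_setOf_eq]
        intro hcon
        apply hzw
        rw [div_mul_eq_mul_div, div_eq_one_iff_eq h0] at hcon
        linear_combination hcon
      have hFd : DifferentiableAt ℂ F u₀ := by
        refine DifferentiableAt.comp u₀ (hfp.differentiableAt (isOpen_Oset.mem_nhds hmem)) ?_
        have hd1 : DifferentiableAt ℂ (fun u : ℂ => z + u) u₀ := by fun_prop
        have hd2 : DifferentiableAt ℂ (fun u : ℂ => 1 + w * u) u₀ := by fun_prop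
        exact (hd1.div hd2 h0).prodMk (differentiableAt_const _)
      have heq : g =ᶠ[nhds u₀] F := by
        have hne : ∀ᶠ u in nhds u₀, 1 + w * u ≠ 0 :=
          (IsOpen.preimage (by fun_prop) isOpen_compl_singleton).mem_nhds h0
        filter_upwards [hne] with u hu using hgF u hu
      exact heq.differentiableAt_iff.mpr hFd
  -- bound on the sphere
  have key : ∀ u : ℂ, ‖u‖ = R → ‖g u‖ ≤ M := by
    intro u hu
    by_cases hd : 1 + w * u = 0
    · -- limit along the circle
      have htend : Tendsto (fun t : ℝ => ‖g (u * Complex.exp (t * Complex.I))‖)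
          (nhdsWithin 0 (Set.Ioi (0:ℝ))) (nhds (‖g u‖)) := by
        have hc : Continuous fun t : ℝ => ‖g (u * Complex.exp (t * Complex.I))‖ :=
          continuous_norm.comp (hg.continuous.comp (by fun_prop))
        have h1 : Tendsto (fun t : ℝ => ‖g (u * Complex.exp (t * Complex.I))‖)
            (nhdsWithin 0 (Set.Ioi (0:ℝ))) (nhds (‖g (u * Complex.exp ((0:ℝ) * Complex.I))‖)) :=
          (hc.tendsto 0).mono_left nhdsWithin_le_nhds
        simpa using h1
      refine le_of_tendsto htend ?_
      have h2π : ∀ᶠ t : ℝ in nhdsWithin 0 (Set.Ioi 0), t < 2 * π :=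
        eventually_nhdsWithin_of_eventually_nhds (eventually_lt_nhds Real.two_pi_pos)
      filter_upwards [self_mem_nhdsWithin, h2π] with t ht hlt
      have habs : ‖u * Complex.exp (t * Complex.I)‖ = R := by
        rw [norm_mul, Complex.norm_exp_ofReal_mul_I, hu, mul_one]
      have hne : 1 + w * (u * Complex.exp (t * Complex.I)) ≠ 0 := by
        intro hcon
        have hexp : Complex.exp (t * Complex.I) = 1 := by
          have hwu : w * u = -1 := by linear_combination hd
          rw [← mul_assoc, hwu] at hcon
          linear_combination -hcon
        rw [Complex.exp_eq_one_iff] at hexp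
        obtain ⟨k, hk⟩ := hexp
        have ht' : t = (k : ℝ) * (2 * π) := by
          have him := congrArg Complex.im hk
          simpa using him
        have ht0 : (0:ℝ) < t := ht
        rcases le_or_gt k 0 with hk0 | hk0
        · have : (k : ℝ) * (2 * π) ≤ 0 := by
            apply mul_nonpos_of_nonpos_of_nonneg
            · exact_mod_cast hk0
            · positivity
          linarith [ht', ht0]
        · have hk1 : (1:ℝ) ≤ (k:ℝ) := by exact_mod_cast hk0
          nlinarith [Real.two_pi_pos]
      rw [hgF _ hne, hF]
      have := hbound (u * Complex.exp (t * Complex.I)) habs (by rwa [mul_comm])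
      simpa [mul_comm] using this
    · rw [hgF _ hd, hF]
      have := hbound u hu (by rwa [mul_comm])
      simpa [mul_comm] using this
  -- Cauchy power series
  have hR' : (0 : NNReal) < R.toNNReal := by simpa using hR
  have hps : HasFPowerSeriesOnBall g (cauchyPowerSeries g 0 R.toNNReal) 0 ⊤ :=
    hg.hasFPowerSeriesOnBall 0 hR'
  have hRcoe : ((R.toNNReal : ℝ)) = R := Real.coe_toNNReal R hR.le
  rw [hRcoe] at hps
  have hder : iteratedDeriv n g 0 = n.factorial • (cauchyPowerSeries g 0 R n fun _ => 1) := by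
    rw [iteratedDeriv_eq_iteratedFDeriv, ← hps.factorial_smul 1 n]
  -- reduce PM to iteratedDeriv of g
  have hPM : PM n 0 fp z w = iteratedDeriv n g 0 := by
    rw [PM, iteratedDeriv_zero]
    have hsimp : (fun u => fp ((z + u) / (1 + w * u), (w + 0) / (1 + z * 0))) = F := by
      funext u; simp [hF]
    rw [hsimp]
    apply Filter.EventuallyEq.iteratedDeriv_eq
    have hne : ∀ᶠ u in nhds (0:ℂ), 1 + w * u ≠ 0 :=
      (IsOpen.preimage (by fun_prop) isOpen_compl_singleton).mem_nhds (by simp)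
    filter_upwards [hne] with u hu using (hgF u hu).symm
  -- integral bound
  have hint : (∫ θ in (0:ℝ)..2 * π, ‖g (circleMap 0 R θ)‖) ≤ 2 * π * M := by
    have h1 : (∫ θ in (0:ℝ)..2 * π, ‖g (circleMap 0 R θ)‖) ≤ ∫ _ in (0:ℝ)..2 * π, M := by
      apply intervalIntegral.integral_mono_on Real.two_pi_pos.le
      · exact ((hg.continuous.comp (continuous_circleMap 0 R)).norm).intervalIntegrable 0 (2 * π)
      · exact intervalIntegrable_const
      · intro θ _
        exact key _ (by rw [norm_circleMap_zero, abs_of_pos hR])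
    simpa [mul_comm] using h1
  have hnorm : ‖iteratedDeriv n g 0‖ ≤ (n.factorial : ℝ) * M / R ^ n := by
    have hle1 : ‖cauchyPowerSeries g 0 R n fun _ => 1‖ ≤ ‖cauchyPowerSeries g 0 R n‖ := by
      have := (cauchyPowerSeries g 0 R n).le_opNorm (fun _ => 1)
      simpa using this
    have hle2 := norm_cauchyPowerSeries_le g 0 R n
    have hRn : |R|⁻¹ ^ n = (R ^ n)⁻¹ := by rw [abs_of_pos hR, inv_pow]
    calc ‖iteratedDeriv n g 0‖
        = (n.factorial : ℝ) * ‖cauchyPowerSeries g 0 R n fun _ => 1‖ := by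
          rw [hder]
          simp [norm_smul]
      _ ≤ (n.factorial : ℝ) * (((2 * π)⁻¹ * ∫ θ in (0:ℝ)..2 * π, ‖g (circleMap 0 R θ)‖)
            * |R|⁻¹ ^ n) := by
          apply mul_le_mul_of_nonneg_left (le_trans hle1 hle2) (by positivity)
      _ ≤ (n.factorial : ℝ) * (((2 * π)⁻¹ * (2 * π * M)) * |R|⁻¹ ^ n) := by
          apply mul_le_mul_of_nonneg_left _ (by positivity)
          apply mul_le_mul_of_nonneg_right _ (by positivity)
          apply mul_le_mul_of_nonneg_left hint (by positivity)
      _ = (n.factorial : ℝ) * M / R ^ n := by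
          rw [hRn]
          have h2π : (2 * π)⁻¹ * (2 * π * M) = M := by
            field_simp
          rw [h2π]
          field_simp
  rw [hPM]
  exact hnorm
end

section
/- Let (f₊, f₋) and (g₊, g₋) be holomorphic pairs on Ω, let ℏ ∈ 𝒟 and let (z,w) ∈ O. Then the Wick star product series converges absolutely at (z,w): the function n ↦ ‖((−1)^n / n!) · (1/(−1/ℏ)_{n↓}) · D^{n,0} g₊(z,w) · D^{0,n} f₊(z,w)‖ is summable over n ∈ ℕ. -/
/-- The falling factorial `(x)_{n↓} = x(x−1)⋯(x−n+1)`. -/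
noncomputable def ffall (x : ℂ) (n : ℕ) : ℂ := ∏ j ∈ Finset.range n, (x - j)

/-- The deformation domain `𝒟 = ℂ* ∖ {−1/n : n ∈ ℕ}`. -/
def Dset : Set ℂ := {h | h ≠ 0 ∧ ∀ n : ℕ, 0 < n → h ≠ -1 / (n : ℂ)}

/-!
Both Peschl–Minda derivatives are Taylor coefficients (times `n!`) of one-variable slices
`u ↦ f((z+u)/(1+wu), w)`. The pair relation `f₊(ζ, w) = f₋(1/w, 1/ζ)` continues such a slice
across the pole `u = -1/w` of the Möbius map, so it is entire. Cauchy's estimates then make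
`|D^{n,0} g₊| / n!` decay faster than any geometric sequence and keep `|D^{0,n} f₊| / n!`
bounded, while `n! / |(x)_{n↓}|` grows at most geometrically.
-/

open Filter Topology
open scoped Nat

lemma PM_zero_right (n : ℕ) (f : ℂ × ℂ → ℂ) (z w : ℂ) :
    PM n 0 f z w = iteratedDeriv n (fun u => f ((z + u) / (1 + w * u), w)) 0 := by
  simp [PM]

lemma PM_zero_left (n : ℕ) (f : ℂ × ℂ → ℂ) (z w : ℂ) :
    PM 0 n f z w = iteratedDeriv n (fun v => f (z, (w + v) / (1 + z * v))) 0 := by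
  simp [PM]

lemma IsHolPair.swap {fp fm : ℂ × ℂ → ℂ} (h : IsHolPair fp fm) :
    IsHolPair (fp ∘ Prod.swap) (fm ∘ Prod.swap) := by
  have hswap : Differentiable ℂ (Prod.swap : ℂ × ℂ → ℂ × ℂ) :=
    differentiable_snd.prodMk differentiable_fst
  have hO : Set.MapsTo Prod.swap Oset Oset := fun p hp => by
    simpa [Oset, mul_comm] using hp
  refine ⟨h.1.comp hswap.differentiableOn hO, h.2.1.comp hswap.differentiableOn hO, ?_⟩
  intro a b ha hb hab
  exact h.2.2 b a hb ha (by rwa [mul_comm])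

lemma moebius_mul_ne_one {z w u : ℂ} (hzw : z * w ≠ 1) (hu : 1 + w * u ≠ 0) :
    (z + u) / (1 + w * u) * w ≠ 1 := by
  rw [div_mul_eq_mul_div, ne_eq, div_eq_one_iff_eq hu]
  contrapose! hzw
  linear_combination hzw

/-- Near `u = -1/w`, where the Möbius map sends `z` to `∞`, the slice of `fp` is continued
by the corresponding slice of `fm` through the pair relation. -/
theorem IsHolPair.exists_differentiable_eventuallyEq {fp fm : ℂ × ℂ → ℂ} (h : IsHolPair fp fm)
    {z w : ℂ} (hzw : z * w ≠ 1) :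
    ∃ G : ℂ → ℂ, Differentiable ℂ G ∧ G =ᶠ[𝓝 0] fun u => fp ((z + u) / (1 + w * u), w) := by
  obtain ⟨hfp, hfm, hpair⟩ := h
  set Fp : ℂ → ℂ := fun u => fp ((z + u) / (1 + w * u), w)
  set Fm : ℂ → ℂ := fun u => fm (w⁻¹, (1 + w * u) / (z + u))
  set Up : Set ℂ := {u | 1 + w * u ≠ 0}
  set Um : Set ℂ := {u | z + u ≠ 0}
  have hUp : IsOpen Up := isOpen_ne.preimage (by fun_prop)
  have hUm : IsOpen Um := isOpen_ne.preimage (by fun_prop)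
  have hFp : DifferentiableOn ℂ Fp Up :=
    hfp.comp (by fun_prop (disch := exact fun u hu => hu))
      fun u hu => moebius_mul_ne_one hzw hu
  let G : ℂ → ℂ := fun u => if 1 + w * u = 0 then fm (w⁻¹, 0) else Fp u
  have hGp : Set.EqOn G Fp Up := fun u hu => if_neg hu
  refine ⟨G, fun u => ?_, eventually_of_mem (hUp.mem_nhds (by simp [Up])) hGp⟩
  by_cases hu : 1 + w * u = 0
  · have hw : w ≠ 0 := by rintro rfl; simp at hu
    have hu' : u ∈ Um := fun h => hzw (by linear_combination w * h - hu)
    have hFm : DifferentiableOn ℂ Fm Um := by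
      refine hfm.comp (by fun_prop (disch := exact fun u hu => hu)) fun u (hu : z + u ≠ 0) => ?_
      simp only [Oset, Set.mem_ofPred_eq, ne_eq]
      rw [inv_mul_eq_div, div_div, div_eq_one_iff_eq (mul_ne_zero hu hw)]
      contrapose! hzw
      linear_combination -hzw
    have hGm : Set.EqOn G Fm Um := fun v (hv : z + v ≠ 0) => by
      by_cases hv' : 1 + w * v = 0
      · simp [G, Fm, hv']
      · simp only [G, Fm, Fp, if_neg hv']
        rw [hpair _ w (div_ne_zero hv hv') hw (moebius_mul_ne_one hzw hv'), one_div, one_div,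
          inv_div]
    exact (hFm.differentiableAt (hUm.mem_nhds hu')).congr_of_eventuallyEq
      (eventually_of_mem (hUm.mem_nhds hu') hGm)
  · exact (hFp.differentiableAt (hUp.mem_nhds hu)).congr_of_eventuallyEq
      (eventually_of_mem (hUp.mem_nhds hu) hGp)

theorem Differentiable.summable_norm_iteratedDeriv_div_factorial_mul_pow {G : ℂ → ℂ}
    (hG : Differentiable ℂ G) (c : ℂ) (r : NNReal) :
    Summable fun n => ‖iteratedDeriv n G c / (n ! : ℂ)‖ * (r : ℝ) ^ n := by
  have hcauchy := hG.hasFPowerSeriesOnBall c one_pos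
  have htaylor := ((hG.analyticAt c).hasFPowerSeriesAt).eq_formalMultilinearSeries
    hcauchy.hasFPowerSeriesAt
  have hr : (r : ENNReal) <
      (FormalMultilinearSeries.ofScalars ℂ fun n => iteratedDeriv n G c / (n ! : ℂ)).radius := by
    rw [htaylor]
    exact lt_of_lt_of_le ENNReal.coe_lt_top hcauchy.r_le
  simpa only [FormalMultilinearSeries.ofScalars_norm] using
    FormalMultilinearSeries.summable_norm_mul_pow _ hr

lemma exists_div_norm_sub_natCast_le (x : ℂ) : ∃ C : ℝ, ∀ j : ℕ, (j + 1 : ℝ) / ‖x - j‖ ≤ C := by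
  have hev : ∀ᶠ j : ℕ in atTop, (j + 1 : ℝ) / ‖x - j‖ ≤ 2 := by
    filter_upwards [eventually_ge_atTop ⌈2 * ‖x‖ + 1⌉₊] with j hj
    have hj' : 2 * ‖x‖ + 1 ≤ j := Nat.ceil_le.mp hj
    have hlow : (j : ℝ) - ‖x‖ ≤ ‖x - j‖ := by
      simpa [norm_sub_rev] using norm_sub_norm_le (j : ℂ) x
    rw [div_le_iff₀ (by linarith [norm_nonneg x])]
    linarith
  obtain ⟨C, hC⟩ := (isBoundedUnder_of_eventually_le hev).bddAbove_range
  exact ⟨C, fun j => hC ⟨j, rfl⟩⟩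

/-- For `x ∈ ℕ` the quotient is eventually `0`, by the convention `a / 0 = 0`. -/
lemma exists_factorial_div_norm_ffall_le (x : ℂ) :
    ∃ C : NNReal, ∀ n : ℕ, (n ! : ℝ) / ‖ffall x n‖ ≤ C ^ n := by
  obtain ⟨C, hC⟩ := exists_div_norm_sub_natCast_le x
  refine ⟨C.toNNReal, fun n => ?_⟩
  rw [ffall, norm_prod, ← Finset.prod_range_add_one_eq_factorial, Nat.cast_prod,
    ← Finset.prod_div_distrib, Finset.pow_eq_prod_const]
  refine Finset.prod_le_prod (fun j _ => by positivity) fun j _ => ?_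
  push_cast
  exact (hC j).trans (Real.le_coe_toNNReal C)

theorem stmt16_general (fp fm gp gm : ℂ × ℂ → ℂ)
    (hf : IsHolPair fp fm) (hg : IsHolPair gp gm)
    (ℏ : ℂ) (z w : ℂ) (hzw : z * w ≠ 1) :
    Summable (fun n : ℕ =>
      ‖((-1 : ℂ) ^ n / (n.factorial : ℂ)) * (1 / ffall (-1 / ℏ) n)
        * PM n 0 gp z w * PM 0 n fp z w‖) := by
  obtain ⟨C, hC⟩ := exists_factorial_div_norm_ffall_le (-1 / ℏ)
  obtain ⟨Gg, hGg, hGg0⟩ := hg.exists_differentiable_eventuallyEq hzw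
  obtain ⟨Gf, hGf, hGf0⟩ := hf.swap.exists_differentiable_eventuallyEq (mul_comm z w ▸ hzw)
  have hDg (n : ℕ) : PM n 0 gp z w = iteratedDeriv n Gg 0 := by
    rw [PM_zero_right, hGg0.iteratedDeriv_eq]
  have hDf (n : ℕ) : PM 0 n fp z w = iteratedDeriv n Gf 0 := by
    rw [PM_zero_left, hGf0.iteratedDeriv_eq]
    rfl
  obtain ⟨B, hB⟩ := (hGf.summable_norm_iteratedDeriv_div_factorial_mul_pow 0 1).tendsto_atTop_zero
    |>.bddAbove_range
  refine .of_nonneg_of_le (fun _ => norm_nonneg _) (fun n => ?_)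
    ((hGg.summable_norm_iteratedDeriv_div_factorial_mul_pow 0 C).mul_right B)
  calc _ = (n ! / ‖ffall (-1 / ℏ) n‖) * ‖iteratedDeriv n Gg 0 / (n ! : ℂ)‖
        * (‖iteratedDeriv n Gf 0 / (n ! : ℂ)‖ * (1 : NNReal) ^ n) := by
        rw [hDg, hDf]
        simp only [one_div, Complex.norm_mul, Complex.norm_div, norm_pow, norm_neg, norm_one,
          one_pow, RCLike.norm_natCast, norm_inv, NNReal.coe_one, mul_one]
        field_simp
    _ ≤ C ^ n * ‖iteratedDeriv n Gg 0 / (n ! : ℂ)‖ * B := by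
        gcongr
        exacts [hC n, hB ⟨n, rfl⟩]
    _ = _ := by ring

/-- absolute convergence of the Wick star product series at `(z,w)`. -/
theorem stmt16 (fp fm gp gm : ℂ × ℂ → ℂ)
    (hf : IsHolPair fp fm) (hg : IsHolPair gp gm)
    (ℏ : ℂ) (hℏ : ℏ ∈ Dset) (z w : ℂ) (hzw : z * w ≠ 1) :
    Summable (fun n : ℕ =>
      ‖((-1 : ℂ) ^ n / (n.factorial : ℂ)) * (1 / ffall (-1 / ℏ) n)
        * PM n 0 gp z w * PM 0 n fp z w‖) :=
  stmt16_general fp fm gp gm hf hg ℏ z w hzw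
end
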